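/- arXiv:2404.18645 — 11 statements merged into one kernel-verified Lean document; each statement's English description precedes it below -/
import Mathlib

section
/- Let T be a spanning tree of a connected graph G rooted at r, and let σ be a vertex ordering of G starting at r such that T is the last-in tree of σ (each non-root vertex is joined in T to its rightmost earlier neighbor in σ). If xy is an edge of G not in T, with x' the parent of x in T and y' the parent of y in T, then either x' ≺_σ x ≺_σ y' ≺_σ y or y' ≺_σ y ≺_σ x' ≺_σ x. -/
/-- σ is a Generic Search (connected) ordering of G: every vertex other than
the first has an earlier neighbor. -/
def IsGSOrder {V : Type*} [Fintype V] (G : SimpleGraph V)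
    (σ : V ≃ Fin (Fintype.card V)) : Prop :=
  ∀ v : V, (σ v : ℕ) ≠ 0 → ∃ u, G.Adj u v ∧ σ u < σ v

/-- `par` is a rooted (spanning) tree structure with root `r`. -/
def IsRootedTree {V : Type*} (par : V → V) (r : V) : Prop :=
  par r = r ∧ ∀ v, ∃ n, par^[n] v = r

/-- The rooted tree given by `par` is a spanning tree of `G`. -/
def IsSpanningTreeOf {V : Type*} (G : SimpleGraph V) (par : V → V) (r : V) : Prop :=
  IsRootedTree par r ∧ ∀ v, v ≠ r → G.Adj (par v) v

/-- `uv` is an edge of the rooted tree given by `par`. -/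
def TreeEdge {V : Type*} (par : V → V) (r : V) (u v : V) : Prop :=
  (v ≠ r ∧ par v = u) ∨ (u ≠ r ∧ par u = v)

/-- The tree given by `par` is the last-in tree of the ordering σ starting at `r`:
each non-root vertex is joined to its rightmost earlier neighbor, which is `par v`. -/
def IsLTreeOf {V : Type*} [Fintype V] (G : SimpleGraph V) (par : V → V) (r : V)
    (σ : V ≃ Fin (Fintype.card V)) : Prop :=
  (σ r : ℕ) = 0 ∧ ∀ v : V, v ≠ r →
    G.Adj (par v) v ∧ σ (par v) < σ v ∧
      ∀ u, G.Adj u v → σ u < σ v → σ u ≤ σ (par v)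

/-- U-bend lemma: for a non-tree edge `xy` of `G`,
either `x' ≺ x ≺ y' ≺ y` or `y' ≺ y ≺ x' ≺ x`, where `x' = par x`, `y' = par y`. -/
theorem stmt0 {V : Type*} [Fintype V] (G : SimpleGraph V) (hG : G.Connected)
    (par : V → V) (r : V) (hT : IsSpanningTreeOf G par r)
    (σ : V ≃ Fin (Fintype.card V)) (hGS : IsGSOrder G σ)
    (hL : IsLTreeOf G par r σ)
    (x y : V) (hx : x ≠ r) (hy : y ≠ r)
    (hxy : G.Adj x y) (hnt : ¬ TreeEdge par r x y) :
    (σ (par x) < σ x ∧ σ x < σ (par y) ∧ σ (par y) < σ y) ∨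
      (σ (par y) < σ y ∧ σ y < σ (par x) ∧ σ (par x) < σ x) := by
  obtain ⟨_, hx1, hx2⟩ := hL.2 x hx
  obtain ⟨_, hy1, hy2⟩ := hL.2 y hy
  have hne : σ x ≠ σ y := fun h => hxy.ne (σ.injective h)
  rcases lt_or_gt_of_ne hne with h | h
  · left
    refine ⟨hx1, ?_, hy1⟩
    have hle := hy2 x hxy h
    have hpy : x ≠ par y := fun he => hnt (Or.inl ⟨hy, he.symm⟩)
    exact lt_of_le_of_ne hle (fun he => hpy (σ.injective he))
  · right
    refine ⟨hy1, ?_, hx1⟩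
    have hle := hx2 y hxy.symm h
    have hpx : y ≠ par x := fun he => hnt (Or.inr ⟨hx, he.symm⟩)
    exact lt_of_le_of_ne hle (fun he => hpx (σ.injective he))
end

section
/- Let T be a spanning tree of a connected graph G rooted at r, and suppose vertices x, y, z form a hook configuration: z is the parent of x in T, xy ∈ E(G) \ E(T), and y is a descendant of z in T but not a descendant of x. Then for any connected vertex ordering σ of G starting at r whose last-in tree is T, it holds that x ≺_σ y. -/
/-- `y` is a descendant of `z` in the rooted tree given by `par`. -/
def Descendant {V : Type*} (par : V → V) (y z : V) : Prop :=
  ∃ n, par^[n] y = z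

/-- Ancestors come no later in an L-tree ordering. -/
lemma anc_le {V : Type*} [Fintype V] {G : SimpleGraph V} {par : V → V} {r : V}
    {σ : V ≃ Fin (Fintype.card V)} (hL : IsLTreeOf G par r σ) (hroot : par r = r) :
    ∀ (n : ℕ) (y : V), σ (par^[n] y) ≤ σ y := by
  intro n
  induction n with
  | zero => intro y; simp
  | succ n ih =>
    intro y
    rw [Function.iterate_succ_apply]
    refine (ih (par y)).trans ?_
    by_cases hy : y = r
    · subst hy; rw [hroot]
    · exact (hL.2 y hy).2.1.le

/-- hook lemma: if `x, y, z` form a hook configuration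
(`z` the parent of `x`, `xy` a non-tree edge of `G`, `y` a descendant of `z`
but not of `x`), then `x ≺_σ y` in any GS ordering starting at `r` with L-tree `T`. -/
theorem stmt1 {V : Type*} [Fintype V] (G : SimpleGraph V) (hG : G.Connected)
    (par : V → V) (r : V) (hT : IsSpanningTreeOf G par r)
    (σ : V ≃ Fin (Fintype.card V)) (hGS : IsGSOrder G σ)
    (hL : IsLTreeOf G par r σ)
    (x y z : V) (hx : x ≠ r) (hz : par x = z)
    (hxy : G.Adj x y) (hnt : ¬ TreeEdge par r x y)
    (hdesc : Descendant par y z) (hndesc : ¬ Descendant par y x) :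
    σ x < σ y := by
  by_contra hcon
  push_neg at hcon
  have hne : σ y ≠ σ x := fun h => hxy.ne (σ.injective h).symm
  have hyx : σ y < σ x := lt_of_le_of_ne hcon hne
  have hyz : σ y ≤ σ z := by
    have := (hL.2 x hx).2.2 y hxy.symm hyx
    rwa [hz] at this
  have hyz' : y ≠ z := by
    intro h
    exact hnt (Or.inr ⟨hx, by rw [hz, h]⟩)
  have hzy : σ z ≤ σ y := by
    obtain ⟨n, hn⟩ := hdesc
    rw [← hn]
    exact anc_le hL hT.1.1 n y
  exact absurd (le_antisymm hzy hyz) (fun h => hyz' (σ.injective h.symm))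
end

section
/- Let T be a spanning tree of a connected graph G rooted at r. If G together with T contains no hook configuration, then every DFS ordering of the tree T starting at r is a Generic Search ordering of G whose last-in tree equals T. -/
/-- `x, y, z` form a hook configuration for `(G, T)` rooted at `r`. -/
def IsHook {V : Type*} (G : SimpleGraph V) (par : V → V) (r : V) (x y z : V) : Prop :=
  x ≠ r ∧ par x = z ∧ G.Adj x y ∧ ¬ TreeEdge par r x y ∧
    Descendant par y z ∧ ¬ Descendant par y x

/-- The four point condition for an ordering σ with respect to an adjacency `adj`. -/
def FourPoint {V : Type*} [Fintype V] (adj : V → V → Prop)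
    (σ : V ≃ Fin (Fintype.card V)) : Prop :=
  ∀ a b c : V, σ a < σ b → σ b < σ c → adj a c → ¬ adj a b →
    ∃ d, σ a < σ d ∧ σ d < σ b ∧ adj d b

set_option linter.unusedSectionVars false
section Aux
variable {V : Type*} [Fintype V] (par : V → V) (r : V)
  (σ : V ≃ Fin (Fintype.card V))

lemma parlt (hTsearch : ∀ v : V, v ≠ r → ∃ u, TreeEdge par r u v ∧ σ u < σ v) :
    ∀ v : V, v ≠ r → σ (par v) < σ v := by
  have key : ∀ n : ℕ, ∀ v : V, (σ v : ℕ) = n → v ≠ r → σ (par v) < σ v := by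
    intro n
    induction n using Nat.strong_induction_on with
    | _ n ih =>
      intro v hvn hvr
      obtain ⟨u, hedge, hlt⟩ := hTsearch v hvr
      rcases hedge with ⟨_, hpv⟩ | ⟨hur, hpu⟩
      · rw [hpv]; exact hlt
      · exfalso
        have h1 : (σ u : ℕ) < n := hvn ▸ hlt
        have h2 := ih (σ u) h1 u rfl hur
        rw [hpu] at h2
        exact absurd hlt (not_lt.mpr (le_of_lt h2))
  intro v hvr; exact key (σ v) v rfl hvr

lemma anc_le_s2 (hpr : par r = r)
    (hplt : ∀ v : V, v ≠ r → σ (par v) < σ v) :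
    ∀ n (v : V), σ (par^[n] v) ≤ σ v := by
  intro n
  induction n with
  | zero => intro v; simp
  | succ n ih =>
    intro v
    rw [Function.iterate_succ_apply]
    refine (ih (par v)).trans ?_
    by_cases hv : v = r
    · subst hv; rw [hpr]
    · exact le_of_lt (hplt v hv)

lemma desc_trans {u p z : V} (h1 : Descendant par u p) (h2 : Descendant par p z) :
    Descendant par u z := by
  obtain ⟨m, hm⟩ := h1
  obtain ⟨n, hn⟩ := h2
  exact ⟨n + m, by rw [Function.iterate_add_apply, hm, hn]⟩

lemma claimA (hpr : par r = r)
    (hplt : ∀ v : V, v ≠ r → σ (par v) < σ v)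
    (hDFS : FourPoint (TreeEdge par r) σ)
    (a b : V) (hab : par b = a) (hbr : b ≠ r) :
    ∀ u : V, σ a < σ u → σ u < σ b → Descendant par u a := by
  have key : ∀ n : ℕ, ∀ u : V, (σ u : ℕ) = n → σ a < σ u → σ u < σ b →
      Descendant par u a := by
    intro n
    induction n using Nat.strong_induction_on with
    | _ n ih =>
      intro u hun hau hub
      by_cases hte : TreeEdge par r a u
      · rcases hte with ⟨hur, hpu⟩ | ⟨har, hpa⟩
        · exact ⟨1, by rw [Function.iterate_one, hpu]⟩
        · exfalso
          have := hplt a har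
          rw [hpa] at this
          exact absurd hau (not_lt.mpr (le_of_lt this))
      · obtain ⟨d, had, hdu, hted⟩ := hDFS a u b hau hub (Or.inl ⟨hbr, hab⟩) hte
        rcases hted with ⟨hur, hpu⟩ | ⟨hdr, hpd⟩
        · have hd : Descendant par d a :=
            ih (σ d) (hun ▸ hdu) d rfl had (hdu.trans hub)
          obtain ⟨m, hm⟩ := hd
          exact ⟨m + 1, by rw [Function.iterate_succ_apply, hpu, hm]⟩
        · exfalso
          have := hplt d hdr
          rw [hpd] at this
          exact absurd hdu (not_lt.mpr (le_of_lt this))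
  intro u hau hub; exact key (σ u) u rfl hau hub

lemma claimB (hpr : par r = r) (hr : (σ r : ℕ) = 0)
    (hplt : ∀ v : V, v ≠ r → σ (par v) < σ v)
    (hDFS : FourPoint (TreeEdge par r) σ) :
    ∀ (n : ℕ) (w z u : V), par^[n] w = z → σ z < σ u → σ u < σ w →
      Descendant par u z := by
  intro n
  induction n with
  | zero =>
    intro w z u hwz hzu huw
    rw [Function.iterate_zero_apply] at hwz
    subst hwz
    exact absurd (hzu.trans huw) (lt_irrefl _)
  | succ n ih =>
    intro w z u hwz hzu huw
    have hwr : w ≠ r := by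
      intro h; subst h
      have : (σ u : ℕ) < 0 := by
        have := huw; rw [Fin.lt_def, hr] at this; exact this
      omega
    rw [Function.iterate_succ_apply] at hwz
    rcases lt_trichotomy (σ u) (σ (par w)) with h | h | h
    · exact ih (par w) z u hwz hzu h
    · have : u = par w := σ.injective h
      exact this ▸ ⟨n, hwz⟩
    · exact desc_trans par (claimA par r σ hpr hplt hDFS (par w) w rfl hwr u h huw)
        ⟨n, hwz⟩

end Aux

/-- if `(G, T)` contains no hook configuration, then every DFS
ordering of the tree `T` starting at `r` is a GS ordering of `G` whose last-in
tree equals `T`. -/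
theorem stmt2 {V : Type*} [Fintype V] (G : SimpleGraph V) (hG : G.Connected)
    (par : V → V) (r : V) (hT : IsSpanningTreeOf G par r)
    (hnohook : ¬ ∃ x y z : V, IsHook G par r x y z)
    (σ : V ≃ Fin (Fintype.card V))
    (hr : (σ r : ℕ) = 0)
    (hTsearch : ∀ v : V, v ≠ r → ∃ u, TreeEdge par r u v ∧ σ u < σ v)
    (hDFS : FourPoint (TreeEdge par r) σ) :
    IsGSOrder G σ ∧ IsLTreeOf G par r σ := by
  obtain ⟨⟨hpr, _⟩, hadj⟩ := hT
  have hplt : ∀ v : V, v ≠ r → σ (par v) < σ v := parlt par r σ hTsearch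
  have hne : ∀ v : V, (σ v : ℕ) ≠ 0 → v ≠ r := by
    intro v hv h; subst h; exact hv hr
  constructor
  · intro v hv0
    have hvr := hne v hv0
    obtain ⟨u, hedge, hlt⟩ := hTsearch v hvr
    rcases hedge with ⟨_, hpv⟩ | ⟨hur, hpu⟩
    · exact ⟨u, hpv ▸ hadj v hvr, hlt⟩
    · exact ⟨u, (hpu ▸ hadj u hur).symm, hlt⟩
  · refine ⟨hr, fun v hvr => ⟨hadj v hvr, hplt v hvr, ?_⟩⟩
    intro u huv hlt
    by_contra hcon
    have hzu : σ (par v) < σ u := lt_of_not_ge hcon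
    refine hnohook ⟨v, u, par v, hvr, rfl, huv.symm, ?_, ?_, ?_⟩
    · intro hte
      rcases hte with ⟨hur, hpu⟩ | ⟨_, hpv⟩
      · have := hplt u hur
        rw [hpu] at this
        exact absurd hlt (not_lt.mpr (le_of_lt this))
      · rw [hpv] at hzu; exact absurd hzu (lt_irrefl _)
    · exact claimB par r σ hpr hr hplt hDFS 1 v (par v) u
        (by rw [Function.iterate_one]) hzu hlt
    · rintro ⟨n, hn⟩
      have := anc_le_s2 par r σ hpr hplt n u
      rw [hn] at this
      exact absurd hlt (not_lt.mpr this)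
end

section
/- Let σ be a DFS ordering of a tree T starting at r (equivalently, an ordering of V(T) satisfying the four point condition with respect to T). If u ≺_σ v, uv ∉ E(T), and there is a vertex w with u ≺_σ v ≺_σ w such that uw ∈ E(T), then v is a descendant of u in T rooted at r; moreover there is a u–v path in T all of whose internal vertices lie strictly between u and v in σ. -/
section Aux

variable {V : Type*} [Fintype V] {T : SimpleGraph V}

open SimpleGraph

/-- Every vertex has a path to the root all of whose vertices come no later. -/
lemma stmt3_chain (hT : T.IsTree) (σ : V ≃ Fin (Fintype.card V))
    (hsearch : ∀ v : V, (σ v : ℕ) ≠ 0 → ∃ u, T.Adj u v ∧ σ u < σ v)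
    (r : V) (hr : (σ r : ℕ) = 0) :
    ∀ n x, (σ x : ℕ) = n → ∃ p : T.Path x r, ∀ y ∈ p.1.support, (σ y : ℕ) ≤ (σ x : ℕ) := by
  intro n
  induction n using Nat.strong_induction_on with
  | _ n ih =>
    intro x hx
    by_cases h0 : (σ x : ℕ) = 0
    · have hxr : x = r := σ.injective (Fin.ext (by omega))
      subst hxr
      exact ⟨⟨Walk.nil, Walk.IsPath.nil⟩, by simp⟩
    · obtain ⟨p0, hadj, hlt⟩ := hsearch x h0
      have hltn : (σ p0 : ℕ) < (σ x : ℕ) := hlt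
      obtain ⟨q, hq⟩ := ih (σ p0 : ℕ) (by omega) p0 rfl
      have hxq : x ∉ q.1.support := by
        intro hmem
        have := hq x hmem
        omega
      refine ⟨⟨Walk.cons hadj.symm q.1, q.2.cons hxq⟩, ?_⟩
      intro y hy
      rw [Walk.support_cons, List.mem_cons] at hy
      rcases hy with hy | hy
      · subst hy; exact le_rfl
      · exact le_trans (hq y hy) (le_of_lt hlt)

/-- Every vertex on a path from `x` to the root comes no later than `x`. -/
lemma stmt3_chain_bound (hT : T.IsTree) (σ : V ≃ Fin (Fintype.card V))
    (hsearch : ∀ v : V, (σ v : ℕ) ≠ 0 → ∃ u, T.Adj u v ∧ σ u < σ v)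
    (r : V) (hr : (σ r : ℕ) = 0)
    (x : V) (p : T.Path x r) : ∀ y ∈ p.1.support, (σ y : ℕ) ≤ (σ x : ℕ) := by
  obtain ⟨q, hq⟩ := stmt3_chain hT σ hsearch r hr (σ x : ℕ) x rfl
  have := hT.IsAcyclic.path_unique p q
  rw [this]
  exact hq

/-- If `x` is an earlier neighbour of `z`, then `x` lies on every path from `z`
to the root. -/
lemma stmt3_edge_mem (hT : T.IsTree) (σ : V ≃ Fin (Fintype.card V))
    (hsearch : ∀ v : V, (σ v : ℕ) ≠ 0 → ∃ u, T.Adj u v ∧ σ u < σ v)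
    (r : V) (hr : (σ r : ℕ) = 0)
    {x z : V} (hadj : T.Adj x z) (hlt : σ x < σ z)
    (p : T.Path z r) : x ∈ p.1.support := by
  by_contra hx
  have hz : z ∈ (Walk.cons hadj p.1).support := by
    rw [Walk.support_cons]; exact List.mem_cons_of_mem _ p.1.start_mem_support
  have := stmt3_chain_bound hT σ hsearch r hr x ⟨Walk.cons hadj p.1, p.2.cons hx⟩ z hz
  have hlt' : (σ x : ℕ) < (σ z : ℕ) := hlt
  omega

/-- Main induction for statement 3. -/
lemma stmt3_main (hT : T.IsTree) (σ : V ≃ Fin (Fintype.card V))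
    (hsearch : ∀ v : V, (σ v : ℕ) ≠ 0 → ∃ u, T.Adj u v ∧ σ u < σ v)
    (h4 : ∀ a b c : V, σ a < σ b → σ b < σ c → T.Adj a c → ¬ T.Adj a b →
      ∃ d, σ a < σ d ∧ σ d < σ b ∧ T.Adj d b)
    (r : V) (hr : (σ r : ℕ) = 0) :
    ∀ n u v w, (σ v : ℕ) = n → σ u < σ v → ¬ T.Adj u v → σ v < σ w → T.Adj u w →
      (∀ p : T.Path v r, u ∈ p.1.support) ∧
      ∃ p : T.Path u v, ∀ y ∈ p.1.support, y ≠ u → y ≠ v →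
        σ u < σ y ∧ σ y < σ v := by
  intro n
  induction n using Nat.strong_induction_on with
  | _ n ih =>
    intro u v w hn huv hnadj hvw huw
    classical
    obtain ⟨d, hud, hdv, hadj_dv⟩ := h4 u v w huv hvw huw hnadj
    have hudn : (σ u : ℕ) < (σ d : ℕ) := hud
    have hdvn : (σ d : ℕ) < (σ v : ℕ) := hdv
    have huvn : (σ u : ℕ) < (σ v : ℕ) := huv
    have hdneu : d ≠ u := fun h => by subst h; omega
    have hdnev : d ≠ v := fun h => by subst h; omega
    have hunev : u ≠ v := fun h => by subst h; omega
    by_cases hadjud : T.Adj u d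
    · constructor
      · intro p
        have hdmem : d ∈ p.1.support :=
          stmt3_edge_mem hT σ hsearch r hr hadj_dv hdv p
        have humem : u ∈ (p.1.dropUntil d hdmem).support :=
          stmt3_edge_mem hT σ hsearch r hr hadjud hud ⟨_, p.2.dropUntil hdmem⟩
        exact Walk.support_dropUntil_subset _ hdmem humem
      · refine ⟨⟨Walk.cons hadjud (Walk.cons hadj_dv Walk.nil), ?_⟩, ?_⟩
        · simp [Walk.cons_isPath_iff, hdneu, hdnev, hunev, Ne.symm hdneu, Ne.symm hdnev,
            Ne.symm hunev]
        · intro y hy hyu hyv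
          simp only [Walk.support_cons, Walk.support_nil, List.mem_cons,
            List.mem_singleton, List.not_mem_nil, or_false] at hy
          rcases hy with h | h | h
          · exact absurd h hyu
          · subst h; exact ⟨hud, hdv⟩
          · exact absurd h hyv
    · obtain ⟨IH1, IH2⟩ := ih (σ d : ℕ) (by omega) u d w rfl hud hadjud
        (lt_trans hdv hvw) huw
      constructor
      · intro p
        have hdmem : d ∈ p.1.support :=
          stmt3_edge_mem hT σ hsearch r hr hadj_dv hdv p
        have humem : u ∈ (p.1.dropUntil d hdmem).support :=
          IH1 ⟨_, p.2.dropUntil hdmem⟩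
        exact Walk.support_dropUntil_subset _ hdmem humem
      · obtain ⟨q, hq⟩ := IH2
        have hbound : ∀ y ∈ q.1.support, (σ y : ℕ) ≤ (σ d : ℕ) := by
          intro y hy
          by_cases hyu : y = u
          · subst hyu; omega
          by_cases hyd : y = d
          · subst hyd; omega
          · have := hq y hy hyu hyd
            have h1 : (σ y : ℕ) < (σ d : ℕ) := this.2
            omega
        have hvq : v ∉ q.1.support := by
          intro hmem
          have := hbound v hmem
          omega
        have hvq' : v ∉ q.1.reverse.support := by
          rwa [Walk.support_reverse, List.mem_reverse]
        refine ⟨⟨(Walk.cons hadj_dv.symm q.1.reverse).reverse,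
          Walk.IsPath.reverse (q.2.reverse.cons hvq')⟩, ?_⟩
        intro y hy hyu hyv
        rw [Walk.support_reverse, List.mem_reverse, Walk.support_cons,
          List.mem_cons] at hy
        rcases hy with h | h
        · exact absurd h hyv
        · rw [Walk.support_reverse, List.mem_reverse] at h
          by_cases hyd : y = d
          · subst hyd; exact ⟨hud, hdv⟩
          · obtain ⟨h1, h2⟩ := hq y h hyu hyd
            exact ⟨h1, lt_trans h2 hdv⟩

end Aux

/-- in a DFS ordering σ of a tree `T` starting at `r = σ⁻¹(0)`
(a connected search ordering of `T` satisfying the four point condition), if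
`u ≺ v`, `uv ∉ E(T)` and there is `w` with `u ≺ v ≺ w` and `uw ∈ E(T)`, then
`v` is a descendant of `u` (i.e. `u` lies on every walk from `v` to the root),
and there is a `u`–`v` path in `T` whose internal vertices lie strictly
between `u` and `v` in σ. -/
theorem stmt3 {V : Type*} [Fintype V] (T : SimpleGraph V) (hT : T.IsTree)
    (σ : V ≃ Fin (Fintype.card V))
    (hsearch : ∀ v : V, (σ v : ℕ) ≠ 0 → ∃ u, T.Adj u v ∧ σ u < σ v)
    (h4 : ∀ a b c : V, σ a < σ b → σ b < σ c → T.Adj a c → ¬ T.Adj a b →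
      ∃ d, σ a < σ d ∧ σ d < σ b ∧ T.Adj d b)
    (u v w : V) (huv : σ u < σ v) (hnadj : ¬ T.Adj u v)
    (hvw : σ v < σ w) (huw : T.Adj u w) :
    (∀ p : T.Walk v (σ.symm ⟨0, Fintype.card_pos_iff.mpr hT.isConnected.nonempty⟩), u ∈ p.support) ∧
      ∃ p : T.Path u v, ∀ y ∈ p.1.support, y ≠ u → y ≠ v →
        σ u < σ y ∧ σ y < σ v := by
  classical
  set r : V := σ.symm ⟨0, Fintype.card_pos_iff.mpr hT.isConnected.nonempty⟩ with hrdef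
  have hr : (σ r : ℕ) = 0 := by simp [hrdef]
  obtain ⟨h1, h2⟩ := stmt3_main hT σ hsearch h4 r hr (σ v : ℕ) u v w rfl huv hnadj hvw huw
  refine ⟨?_, h2⟩
  intro p
  have := h1 ⟨p.bypass, p.bypass_isPath⟩
  exact p.support_bypass_subset this
end

section
/- Let G be a connected graph with spanning tree T rooted at r, with height at least 2, and let s ∉ V(G). Define C to consist of: (i) one triple (r, t, s) for some fixed child t of r in T; (ii) triples (s, u, v) for every non-root vertex v with parent u in T; (iii) triples (w, u, v) for every non-root vertex v with parent u in T and every vertex w with vw ∈ E(G) \ E(T). Then (V(G) ∪ {s}, C) admits an intermezzo ordering if and only if there is a Generic Search ordering of G starting at r whose last-in tree is T. -/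
/-- The triple set of the reduction from rooted L-tree recognition to the
General Intermezzo problem, on the ground set `Option V` where `none` plays
the role of the new element `s` and `t` is a fixed child of the root. -/
def RedTriples {V : Type*} (G : SimpleGraph V) (par : V → V) (r t : V) :
    Set (Option V × Option V × Option V) :=
  {(some r, some t, none)} ∪
  {p | ∃ v : V, v ≠ r ∧ p = (none, some (par v), some v)} ∪
  {p | ∃ v w : V, v ≠ r ∧ G.Adj w v ∧ ¬ TreeEdge par r w v ∧
        p = (some w, some (par v), some v)}

/-- the instance `(V(G) ∪ {s}, C)` admits an intermezzo
ordering iff there is a GS ordering of `G` starting at `r` with last-in tree `T`. -/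
theorem stmt6 {V : Type*} [Fintype V] (G : SimpleGraph V) (hG : G.Connected)
    (par : V → V) (r : V) (hT : IsSpanningTreeOf G par r)
    (hheight : ∃ v : V, v ≠ r ∧ par v ≠ r)
    (t : V) (ht : t ≠ r ∧ par t = r) :
    (∃ τ : Option V ≃ Fin (Fintype.card (Option V)),
        ∀ tr ∈ RedTriples G par r t,
          (τ tr.1 < τ tr.2.1 ∧ τ tr.2.1 < τ tr.2.2) ∨
          (τ tr.2.1 < τ tr.2.2 ∧ τ tr.2.2 < τ tr.1)) ↔
    (∃ σ : V ≃ Fin (Fintype.card V), IsGSOrder G σ ∧ IsLTreeOf G par r σ) := by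
  classical
  obtain ⟨hRT, hadj⟩ := hT
  have hparne : ∀ v : V, v ≠ r → par v ≠ v := by
    intro v hv he
    obtain ⟨n, hn⟩ := hRT.2 v
    rw [Function.iterate_fixed he] at hn
    exact hv hn
  have hcard : Fintype.card (Option V) = Fintype.card V + 1 := Fintype.card_option
  constructor
  · rintro ⟨τ, hτ⟩
    -- membership facts
    have m1 : ((some r : Option V), some t, none) ∈ RedTriples G par r t :=
      Or.inl (Or.inl rfl)
    have m2 : ∀ v : V, v ≠ r →
        ((none : Option V), some (par v), some v) ∈ RedTriples G par r t :=
      fun v hv => Or.inl (Or.inr ⟨v, hv, rfl⟩)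
    have m3 : ∀ v w : V, v ≠ r → G.Adj w v → ¬ TreeEdge par r w v →
        ((some w : Option V), some (par v), some v) ∈ RedTriples G par r t :=
      fun v w hv ha hnt => Or.inr ⟨v, w, hv, ha, hnt, rfl⟩
    have h2 : ∀ v : V, v ≠ r →
        (τ none < τ (some (par v)) ∧ τ (some (par v)) < τ (some v)) ∨
        (τ (some (par v)) < τ (some v) ∧ τ (some v) < τ none) :=
      fun v hv => hτ _ (m2 v hv)
    -- every vertex is before `none`
    have hbefore : ∀ v : V, τ (some v) < τ none := by
      by_contra hc
      push_neg at hc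
      obtain ⟨v, hv⟩ := hc
      have hvlt : τ none < τ (some v) := by
        rcases lt_or_eq_of_le hv with h | h
        · exact h
        · exact absurd (τ.injective h) (by simp)
      -- pick a minimal such vertex
      obtain ⟨v0, hv0S, hv0min⟩ :=
        Finset.exists_min_image (Finset.univ.filter fun v => τ none < τ (some v))
          (fun v => τ (some v)) ⟨v, by simpa using hvlt⟩
      have hv0 : τ none < τ (some v0) := by simpa using hv0S
      by_cases hvr : v0 = r
      · rw [hvr] at hv0
        have hA := hτ _ m1
        have hB := h2 t ht.1
        rw [ht.2] at hB
        simp only at hA hB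
        rcases hA with ⟨h1, h3⟩ | ⟨h1, h3⟩
        · exact absurd ((h1.trans h3).trans hv0) (lt_irrefl _)
        · have hrt : τ (some r) < τ (some t) := hB.elim (·.2) (·.1)
          exact absurd ((hrt.trans h1).trans h3) (lt_irrefl _)
      · rcases h2 v0 hvr with ⟨h1, h3⟩ | ⟨h1, h3⟩
        · have hmem : par v0 ∈ Finset.univ.filter fun v => τ none < τ (some v) := by
            simpa using h1
          exact absurd h3 (not_lt.2 (hv0min _ hmem))
        · exact absurd (h3.trans hv0) (lt_irrefl _)
    have hval : ∀ v : V, ((τ (some v) : Fin (Fintype.card (Option V))) : ℕ) <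
        Fintype.card V := by
      intro v
      have h1 : ((τ (some v)) : ℕ) < ((τ none) : ℕ) := hbefore v
      have h2' : ((τ none) : ℕ) < Fintype.card (Option V) := (τ none).isLt
      omega
    set f : V → Fin (Fintype.card V) := fun v => ⟨(τ (some v) : ℕ), hval v⟩ with hf
    have finj : Function.Injective f := by
      intro a b hab
      rw [hf] at hab
      have hv' : ((τ (some a)) : ℕ) = ((τ (some b)) : ℕ) := by
        simpa [Fin.mk.injEq] using hab
      exact Option.some_injective _ (τ.injective (Fin.val_injective hv'))
    have fbij : Function.Bijective f :=
      (Fintype.bijective_iff_injective_and_card f).2 ⟨finj, by simp⟩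
    refine ⟨Equiv.ofBijective f fbij, ?_⟩
    set σ := Equiv.ofBijective f fbij with hσ
    have happ : ∀ v : V, σ v = f v := fun _ => rfl
    have hlt : ∀ a b : V, σ a < σ b ↔ τ (some a) < τ (some b) := by
      intro a b
      rw [happ, happ, Fin.lt_def, Fin.lt_def]
    have hpar : ∀ v : V, v ≠ r → σ (par v) < σ v := by
      intro v hv
      rcases h2 v hv with ⟨h1, h3⟩ | ⟨h1, h3⟩
      · exact absurd (h1.trans (h3.trans (hbefore v))) (lt_irrefl _)
      · exact (hlt _ _).2 h1
    have hpos : 0 < Fintype.card V := Fintype.card_pos_iff.2 ⟨r⟩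
    have hσr : (σ r : ℕ) = 0 := by
      by_contra hc
      set v0 := σ.symm ⟨0, hpos⟩ with hv0
      have hσv0 : σ v0 = ⟨0, hpos⟩ := σ.apply_symm_apply _
      have hv0r : v0 ≠ r := by
        intro he
        rw [he] at hσv0
        exact hc (by rw [hσv0])
      have := hpar v0 hv0r
      rw [hσv0, Fin.lt_def] at this
      simp at this
    refine ⟨?_, hσr, ?_⟩
    · intro v hv
      have hvr : v ≠ r := fun he => hv (he ▸ hσr)
      exact ⟨par v, hadj v hvr, hpar v hvr⟩
    · intro v hv
      refine ⟨hadj v hv, hpar v hv, ?_⟩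
      intro u hu hult
      by_cases hupar : u = par v
      · exact le_of_eq (congrArg σ hupar)
      by_cases hte : TreeEdge par r u v
      · rcases hte with ⟨_, hpv⟩ | ⟨hur, hpu⟩
        · exact absurd hpv.symm hupar
        · have := hpar u hur
          rw [hpu] at this
          exact absurd hult (lt_asymm this)
      · rcases hτ _ (m3 v u hv hu hte) with ⟨h1, _⟩ | ⟨_, h3⟩
        · exact le_of_lt ((hlt _ _).2 h1)
        · exact absurd hult (lt_asymm ((hlt _ _).2 h3))
  · rintro ⟨σ, hGS, hσr, hL⟩
    set τ : Option V ≃ Fin (Fintype.card (Option V)) :=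
      (Equiv.optionCongr σ).trans
        (finSuccEquivLast.symm.trans (finCongr hcard.symm)) with hτdef
    have hs : ∀ v : V, (τ (some v) : ℕ) = (σ v : ℕ) := by
      intro v
      simp [hτdef, finSuccEquivLast_symm_some]
    have hn : (τ none : ℕ) = Fintype.card V := by
      simp [hτdef, finSuccEquivLast_symm_none]
    refine ⟨τ, ?_⟩
    rintro tr (htr | htr)
    · rcases htr with htr | ⟨v, hv, htr⟩
      · -- tr = (some r, some t, none)
        rw [Set.mem_singleton_iff] at htr
        subst htr
        left
        have h0 : (σ t : ℕ) ≠ 0 := by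
          intro he
          exact ht.1 (σ.injective (Fin.val_injective (he.trans hσr.symm)))
        constructor <;> rw [Fin.lt_def]
        · rw [hs, hs, hσr]; omega
        · rw [hs, hn]; exact (σ t).isLt
      · subst htr
        right
        have hp := (hL v hv).2.1
        rw [Fin.lt_def] at hp
        constructor <;> rw [Fin.lt_def]
        · rw [hs, hs]; exact hp
        · rw [hs, hn]; exact (σ v).isLt
    · obtain ⟨v, w, hv, haw, hnt, htr⟩ := htr
      subst htr
      have hp := (hL v hv).2.1
      have hwv : w ≠ v := haw.ne
      have hwpar : par v ≠ w := fun he => hnt (Or.inl ⟨hv, he⟩)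
      rcases lt_trichotomy (σ w) (σ v) with hc | hc | hc
      · left
        have hle := (hL v hv).2.2 w haw hc
        have hne : σ w ≠ σ (par v) := fun he =>
          hwpar (σ.injective he).symm
        have h1 : σ w < σ (par v) := lt_of_le_of_ne hle hne
        rw [Fin.lt_def] at h1 hp
        constructor <;> rw [Fin.lt_def] <;> rw [hs, hs]
        · exact h1
        · exact hp
      · exact absurd (σ.injective hc) hwv
      · right
        rw [Fin.lt_def] at hp hc
        constructor <;> rw [Fin.lt_def]
        · rw [hs, hs]; exact hp
        · rw [hs, hs]; exact hc
end

section
/- Let (A, C) be an instance of the General Intermezzo problem constructed as in the reduction from a graph G with spanning tree T rooted at r (triples (r,t,s), (s,u,v) for parent-child pairs, and (w,u,v) for non-tree edges wv and parents u of v). If σ is an intermezzo ordering of (A, C) and σ' is σ with the element s removed, then in σ' every vertex of G appears after its parent in T, and the last-in tree of σ' with respect to G equals T. -/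
/-- if τ is an intermezzo ordering of the reduction instance,
then after removing `s` (= `none`) every vertex appears after its parent in
`T`, and the last-in tree of the resulting ordering of `V(G)` equals `T` (the
parent of each non-root vertex is its rightmost earlier `G`-neighbor). -/
theorem stmt7 {V : Type*} [Fintype V] (G : SimpleGraph V) (hG : G.Connected)
    (par : V → V) (r : V) (hT : IsSpanningTreeOf G par r)
    (t : V) (ht : t ≠ r ∧ par t = r)
    (τ : Option V ≃ Fin (Fintype.card (Option V)))
    (hτ : ∀ tr ∈ RedTriples G par r t,
        (τ tr.1 < τ tr.2.1 ∧ τ tr.2.1 < τ tr.2.2) ∨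
        (τ tr.2.1 < τ tr.2.2 ∧ τ tr.2.2 < τ tr.1)) :
    ∀ v : V, v ≠ r →
      τ (some (par v)) < τ (some v) ∧
      ∀ u : V, G.Adj u v → τ (some u) < τ (some v) →
        τ (some u) ≤ τ (some (par v)) := by
  have h2 : ∀ x : V, x ≠ r → τ (some (par x)) < τ (some x) := by
    intro x hx
    have hm : (none, some (par x), some x) ∈ RedTriples G par r t := by
      left; right; exact ⟨x, hx, rfl⟩
    rcases hτ _ hm with ⟨_, h⟩ | ⟨h, _⟩ <;> exact h
  intro v hv
  refine ⟨h2 v hv, ?_⟩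
  intro u hu huv
  by_cases hte : TreeEdge par r u v
  · rcases hte with ⟨_, hpv⟩ | ⟨hur, hpu⟩
    · rw [hpv]
    · have hx := h2 u hur
      rw [hpu] at hx
      exact absurd huv (lt_asymm hx)
  · have hm : (some u, some (par v), some v) ∈ RedTriples G par r t := by
      right; exact ⟨v, u, hv, hu, hte, rfl⟩
    rcases hτ _ hm with ⟨h1, _⟩ | ⟨_, h3⟩
    · exact h1.le
    · exact absurd huv (lt_asymm h3)
end

section
/- Every partial order whose Hasse diagram is a rooted tree with the unique minimal element as root (a cs-tree) has order dimension at most 2; i.e., it is the intersection of two linear orders. -/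
/-!
In a cs-tree every down-set `Iic x` is a chain, so two incomparable elements `x`, `y` branch
apart at a pair of distinct siblings `c ≤ x`, `c' ≤ y` covering a common element. Fixing an
injective labelling `v` of the elements, declare `x` left of `y` when `v c < v c'`; together
with the given order this is a linear extension (a depth-first traversal of the tree). Doing
the same with the reversed labelling swaps the sides of every incomparable pair, so the two
linear extensions intersect in the original order.
-/

open OrderDual

theorem exists_injective_nat_rank {α : Type*} [Fintype α] (r : α → α → Prop)
    (htotal : ∀ x y, r x y ∨ r y x) (htrans : ∀ {x y z}, r x y → r y z → r x z)
    (hantisymm : ∀ {x y}, r x y → r y x → x = y) :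
    ∃ F : α → ℕ, Function.Injective F ∧ ∀ x y, r x y ↔ F x ≤ F y := by
  classical
  let below (x : α) : Finset α := {z | r z x}
  have hF : ∀ x y, r x y ↔ (below x).card ≤ (below y).card := by
    refine fun x y => ⟨fun hxy => ?_, fun hle => ?_⟩
    · exact Finset.card_le_card fun z hz => by
        simp only [below, Finset.mem_filter, Finset.mem_univ, true_and] at hz ⊢
        exact htrans hz hxy
    · by_contra hxy
      have hyx : r y x := (htotal x y).resolve_left hxy
      have hsub : below y ⊂ below x := by
        refine Finset.ssubset_iff_of_subset (fun z hz => ?_) |>.mpr ⟨x, ?_, ?_⟩ <;>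
          simp only [below, Finset.mem_filter, Finset.mem_univ, true_and] at *
        · exact htrans hz hyx
        · exact (htotal x x).elim id id
        · exact hxy
      exact (Finset.card_lt_card hsub).not_ge hle
  exact ⟨_, fun x y h => hantisymm ((hF x y).2 h.le) ((hF y x).2 h.ge), hF⟩

section TreeOrder

variable {α : Type*} [PartialOrder α]

theorem isChain_Iic_of_existsUnique_covBy [WellFoundedLT α] [IsStronglyCoatomic α] {b : α}
    (hb : ∀ x, b ≤ x) (hcov : ∀ x, x ≠ b → ∃! y, y ⋖ x) (t : α) :
    IsChain (· ≤ ·) (Set.Iic t) := by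
  induction t using WellFoundedLT.induction with
  | ind t ih =>
    intro u hu w hw _
    rcases (Set.mem_Iic.1 hu).eq_or_lt with rfl | hut
    · exact Or.inr hw
    rcases (Set.mem_Iic.1 hw).eq_or_lt with rfl | hwt
    · exact Or.inl hu
    obtain ⟨p, hp, hp_unique⟩ := hcov t (hb u |>.trans_lt hut).ne'
    obtain ⟨z, huz, hzt⟩ := exists_le_covBy_of_lt hut
    obtain ⟨z', hwz', hz't⟩ := exists_le_covBy_of_lt hwt
    exact (ih p hp.lt).total (hp_unique z hzt ▸ huz) (hp_unique z' hz't ▸ hwz')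

variable (hα : ∀ x : α, IsChain (· ≤ ·) (Set.Iic x))
include hα

theorem le_of_lt_of_covBy {x a c : α} (hxc : x < c) (hac : a ⋖ c) : x ≤ a :=
  ((hα c).total hxc.le hac.le).elim id fun hax =>
    hax.eq_or_lt.elim (·.ge) fun hlt => (hac.2 hlt hxc).elim

theorem eq_of_covBy_of_le {a c c' y : α} (hc : a ⋖ c) (hc' : a ⋖ c') (hcy : c ≤ y)
    (hc'y : c' ≤ y) : c = c' := by
  rcases (hα y).total hcy hc'y with h | h
  · exact h.eq_or_lt.resolve_right fun hlt => (le_of_lt_of_covBy hα hlt hc').not_gt hc.lt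
  · exact (h.eq_or_lt.resolve_right fun hlt => (le_of_lt_of_covBy hα hlt hc).not_gt hc'.lt).symm

omit hα

def LeftOf {β : Type*} [LinearOrder β] (v : α → β) (x y : α) : Prop :=
  ∃ w c c', w ⋖ c ∧ w ⋖ c' ∧ c ≤ x ∧ c' ≤ y ∧ v c < v c'

def TreeLex {β : Type*} [LinearOrder β] (v : α → β) (x y : α) : Prop :=
  x ≤ y ∨ LeftOf v x y

namespace LeftOf

variable {β : Type*} [LinearOrder β] {v : α → β} {x y z : α}

theorem dual_iff : LeftOf (toDual ∘ v) x y ↔ LeftOf v y x :=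
  ⟨fun ⟨w, c, c', hc, hc', hcx, hc'y, hv⟩ => ⟨w, c', c, hc', hc, hc'y, hcx, hv⟩,
    fun ⟨w, c, c', hc, hc', hcy, hc'x, hv⟩ => ⟨w, c', c, hc', hc, hc'x, hcy, hv⟩⟩

theorem or_of_not_le_of_not_ge [Finite α] {b : α} (hb : ∀ x, b ≤ x)
    (hv : Function.Injective v) (hxy : ¬ x ≤ y) (hyx : ¬ y ≤ x) :
    LeftOf v x y ∨ LeftOf v y x := by
  obtain ⟨w, ⟨hwx, hwy⟩, hw_max⟩ :=
    (Set.toFinite {z | z ≤ x ∧ z ≤ y}).exists_maximal ⟨b, hb x, hb y⟩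
  obtain ⟨c, hc, hcx⟩ := exists_covBy_le_of_lt (hwx.lt_of_ne fun h => hxy (h ▸ hwy))
  obtain ⟨c', hc', hc'y⟩ := exists_covBy_le_of_lt (hwy.lt_of_ne fun h => hyx (h ▸ hwx))
  have hne : c ≠ c' := fun h => hc.lt.not_ge (hw_max ⟨hcx, h ▸ hc'y⟩ hc.le)
  rcases (hv.ne hne).lt_or_gt with h | h
  · exact Or.inl ⟨w, c, c', hc, hc', hcx, hc'y, h⟩
  · exact Or.inr ⟨w, c', c, hc', hc, hc'y, hcx, h⟩

include hα

theorem not_le (h : LeftOf v x y) : ¬ x ≤ y := by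
  obtain ⟨w, c, c', hc, hc', hcx, hc'y, hv⟩ := h
  exact fun hxy => hv.ne (congrArg v (eq_of_covBy_of_le hα hc hc' (hcx.trans hxy) hc'y))

theorem not_ge (h : LeftOf v x y) : ¬ y ≤ x := by
  obtain ⟨w, c, c', hc, hc', hcx, hc'y, hv⟩ := h
  exact fun hyx => hv.ne (congrArg v (eq_of_covBy_of_le hα hc hc' hcx (hc'y.trans hyx)))

theorem irrefl (x : α) : ¬ LeftOf v x x :=
  fun h => h.not_le hα le_rfl

/-- Both splittings happen below `y`, so they are nested: unless they coincide, the higher one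
lies above a branch of the lower one. -/
theorem trans (hxy : LeftOf v x y) (hyz : LeftOf v y z) : LeftOf v x z := by
  obtain ⟨w₁, c₁, d₁, hc₁, hd₁, hc₁x, hd₁y, hv₁⟩ := hxy
  obtain ⟨w₂, d₂, c₂, hd₂, hc₂, hd₂y, hc₂z, hv₂⟩ := hyz
  rcases eq_or_ne d₁ d₂ with rfl | hne
  · obtain rfl : w₁ = w₂ :=
      le_antisymm (le_of_lt_of_covBy hα hd₁.lt hd₂) (le_of_lt_of_covBy hα hd₂.lt hd₁)
    exact ⟨w₁, c₁, c₂, hc₁, hc₂, hc₁x, hc₂z, hv₁.trans hv₂⟩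
  rcases (hα y).total hd₁y hd₂y with h | h
  · have hd₁z : d₁ ≤ z :=
      (le_of_lt_of_covBy hα (h.lt_of_ne hne) hd₂).trans (hc₂.le.trans hc₂z)
    exact ⟨w₁, c₁, d₁, hc₁, hd₁, hc₁x, hd₁z, hv₁⟩
  · have hd₂x : d₂ ≤ x :=
      (le_of_lt_of_covBy hα (h.lt_of_ne hne.symm) hd₁).trans (hc₁.le.trans hc₁x)
    exact ⟨w₂, d₂, c₂, hd₂, hc₂, hd₂x, hc₂z, hv₂⟩

end LeftOf

namespace TreeLex

variable {β : Type*} [LinearOrder β] {v : α → β} {x y z : α}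

theorem total [Finite α] {b : α} (hb : ∀ x, b ≤ x) (hv : Function.Injective v) (x y : α) :
    TreeLex v x y ∨ TreeLex v y x := by
  by_cases hxy : x ≤ y
  · exact Or.inl (Or.inl hxy)
  by_cases hyx : y ≤ x
  · exact Or.inr (Or.inl hyx)
  exact (LeftOf.or_of_not_le_of_not_ge hb hv hxy hyx).imp Or.inr Or.inr

include hα

theorem trans (hxy : TreeLex v x y) (hyz : TreeLex v y z) : TreeLex v x z := by
  rcases hxy with hxy | hxy <;> rcases hyz with hyz | hyz
  · exact Or.inl (hxy.trans hyz)
  · obtain ⟨w, c, c', hc, hc', hcy, hc'z, hv⟩ := hyz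
    rcases (hα y).total hcy hxy with hcx | hxc
    · exact Or.inr ⟨w, c, c', hc, hc', hcx, hc'z, hv⟩
    rcases hxc.eq_or_lt with rfl | hxc
    · exact Or.inr ⟨w, x, c', hc, hc', le_rfl, hc'z, hv⟩
    · exact Or.inl ((le_of_lt_of_covBy hα hxc hc).trans (hc'.le.trans hc'z))
  · obtain ⟨w, c, c', hc, hc', hcx, hc'y, hv⟩ := hxy
    exact Or.inr ⟨w, c, c', hc, hc', hcx, hc'y.trans hyz, hv⟩
  · exact Or.inr (hxy.trans hα hyz)

theorem antisymm (hxy : TreeLex v x y) (hyx : TreeLex v y x) : x = y := by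
  rcases hxy with hxy | hxy <;> rcases hyx with hyx | hyx
  · exact le_antisymm hxy hyx
  · exact (hyx.not_ge hα hxy).elim
  · exact (hxy.not_ge hα hyx).elim
  · exact (LeftOf.irrefl hα x (hxy.trans hα hyx)).elim

end TreeLex

include hα in
theorem le_iff_treeLex_and_treeLex_toDual {β : Type*} [LinearOrder β] (v : α → β) (x y : α) :
    x ≤ y ↔ TreeLex v x y ∧ TreeLex (toDual ∘ v) x y := by
  refine ⟨fun h => ⟨Or.inl h, Or.inl h⟩, fun ⟨h, h'⟩ =>
    h.elim id fun hl => h'.elim id fun hr => ?_⟩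
  exact (LeftOf.irrefl hα x (hl.trans hα (LeftOf.dual_iff.1 hr))).elim

end TreeOrder

/-- Wolk: every finite cs-tree (a partial order with a
minimum element `b` in which every element other than `b` covers exactly one
element, i.e. whose Hasse diagram is a tree rooted at the unique minimal
element) has order dimension at most 2: it is the intersection of two linear
orders. -/
theorem stmt8 {α : Type*} [Fintype α] [PartialOrder α]
    (b : α) (hb : ∀ x, b ≤ x)
    (hcov : ∀ x : α, x ≠ b → ∃! y : α, y ⋖ x) :
    ∃ f g : α → ℕ, Function.Injective f ∧ Function.Injective g ∧
      ∀ x y : α, x ≤ y ↔ (f x ≤ f y ∧ g x ≤ g y) := by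
  have hα := isChain_Iic_of_existsUnique_covBy hb hcov
  obtain ⟨n, ⟨e⟩⟩ := Finite.exists_equiv_fin α
  have he' : Function.Injective (toDual ∘ e) := toDual.injective.comp e.injective
  obtain ⟨f, hf_inj, hf⟩ := exists_injective_nat_rank (TreeLex e)
    (TreeLex.total hb e.injective) (TreeLex.trans hα) (TreeLex.antisymm hα)
  obtain ⟨g, hg_inj, hg⟩ := exists_injective_nat_rank (TreeLex (toDual ∘ e))
    (TreeLex.total hb he') (TreeLex.trans hα) (TreeLex.antisymm hα)
  refine ⟨f, g, hf_inj, hg_inj, fun x y => ?_⟩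
  rw [le_iff_treeLex_and_treeLex_toDual hα e, hf, hg]
end

section
/- In the W[1]-hardness reduction from Multicolor Clique, the reflexive-transitive closure of the relation B (on the ground set A consisting of elements s^i for 1 ≤ i ≤ k+1, c^{i,j} for 1 ≤ i ≤ j ≤ k, and u^i_{p,j} for 1 ≤ i ≤ k, 1 ≤ p ≤ q, 0 ≤ j ≤ k) forms a cs-tree of width exactly k+1. -/
/-- Index type for the elements `c^{i,j}`, `1 ≤ i ≤ j ≤ k` (0-indexed here). -/
abbrev CIdx (k : ℕ) := {p : Fin k × Fin k // p.1 ≤ p.2}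

/-- Ground set of the Multicolor Clique reduction: elements `s^i` (`1 ≤ i ≤ k+1`),
`c^{i,j}` (`1 ≤ i ≤ j ≤ k`) and `u^i_{p,j}` (`1 ≤ i ≤ k`, `1 ≤ p ≤ q`, `0 ≤ j ≤ k`);
all indices are 0-indexed except `j`, which ranges over `0..k` as in the paper. -/
abbrev MCG (k q : ℕ) := Fin (k + 1) ⊕ (CIdx k ⊕ (Fin k × Fin q × Fin (k + 1)))

variable {k q : ℕ}

/-- The element `s^{i+1}` (for 0-indexed `i`). -/
def sE (i : Fin (k + 1)) : MCG k q := Sum.inl i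

/-- The element `c^{i+1,j+1}` (for 0-indexed index pair). -/
def cE (c : CIdx k) : MCG k q := Sum.inr (Sum.inl c)

/-- The element `u^{i+1}_{p+1,j}` (for 0-indexed `i`, `p`; `j` as in the paper). -/
def uE (i : Fin k) (p : Fin q) (j : Fin (k + 1)) : MCG k q :=
  Sum.inr (Sum.inr (i, p, j))

/-- `c^{ℓ+1,m+1}` built from natural number indices. -/
def cP (ℓ m : ℕ) (h1 : ℓ ≤ m) (h2 : m < k) : MCG k q :=
  cE ⟨(⟨ℓ, lt_of_le_of_lt h1 h2⟩, ⟨m, h2⟩), Fin.mk_le_mk.mpr h1⟩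

/-- `u^{i+1}_{p+1,j}` built from natural number indices. -/
def uP (i : ℕ) (hi : i < k) (p : Fin q) (j : ℕ) (hj : j < k + 1) : MCG k q :=
  uE ⟨i, hi⟩ p ⟨j, hj⟩

/-- The pair constraints `B` of the reduction. -/
def Brel : MCG k q → MCG k q → Prop
  | Sum.inl i, Sum.inr (Sum.inr (i', _, _)) => i.val = i'.val
  | Sum.inr (Sum.inr (i, p, j)), Sum.inr (Sum.inr (i', p', j')) =>
      i = i' ∧ (p < p' ∨ (p = p' ∧ j < j'))
  | Sum.inr (Sum.inr (i, p, j)), Sum.inl i' =>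
      p.val = 0 ∧ j.val = 0 ∧ i'.val = i.val + 1
  | Sum.inr (Sum.inl c), Sum.inr (Sum.inl c') =>
      c.val.1 < c'.val.1 ∨ (c.val.1 = c'.val.1 ∧ c.val.2 < c'.val.2)
  | Sum.inl i, Sum.inr (Sum.inl c') =>
      i.val = k ∧ c'.val.1.val = 0 ∧ c'.val.2.val = 0
  | _, _ => False


/-- The partial order `π(B)`: reflexive-transitive closure of `B`. -/
def BOrd : MCG k q → MCG k q → Prop := Relation.ReflTransGen Brel

/-- A finite antichain of `π(B)`. -/
def IsBAntichain (S : Finset (MCG k q)) : Prop :=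
  ∀ x ∈ S, ∀ y ∈ S, x ≠ y → ¬ BOrd x y ∧ ¬ BOrd y x

/-- Explicit description of the reflexive–transitive closure of `Brel`. -/
def Bord' : MCG k q → MCG k q → Prop
  | Sum.inl i, Sum.inl i' => i.val ≤ i'.val
  | Sum.inl i, Sum.inr (Sum.inr (i', _, _)) => i.val ≤ i'.val
  | Sum.inl _, Sum.inr (Sum.inl _) => True
  | Sum.inr (Sum.inr (i, p, j)), Sum.inl i' => p.val = 0 ∧ j.val = 0 ∧ i.val < i'.val
  | Sum.inr (Sum.inr (i, p, j)), Sum.inr (Sum.inr (i', p', j')) =>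
      (i.val = i'.val ∧ (p.val < p'.val ∨ (p.val = p'.val ∧ j.val ≤ j'.val))) ∨
      (p.val = 0 ∧ j.val = 0 ∧ i.val < i'.val)
  | Sum.inr (Sum.inr (_, p, j)), Sum.inr (Sum.inl _) => p.val = 0 ∧ j.val = 0
  | Sum.inr (Sum.inl c), Sum.inr (Sum.inl c') =>
      c.val.1.val < c'.val.1.val ∨ (c.val.1.val = c'.val.1.val ∧ c.val.2.val ≤ c'.val.2.val)
  | Sum.inr (Sum.inl _), _ => False

lemma bord'_refl (x : MCG k q) : Bord' x x := by
  rcases x with i | c | ⟨i, p, j⟩ <;> simp [Bord'] <;> omega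

lemma bord'_step {x y z : MCG k q} (h1 : Bord' x y) (h2 : Brel y z) : Bord' x z := by
  rcases x with xi | xc | ⟨xi, xp, xj⟩ <;> rcases y with yi | yc | ⟨yi, yp, yj⟩ <;>
    rcases z with zi | zc | ⟨zi, zp, zj⟩ <;>
    simp only [Bord', Brel, Fin.ext_iff, Fin.lt_def] at * <;> omega

lemma bord_to_bord' {x y : MCG k q} (h : BOrd x y) : Bord' x y := by
  induction h with
  | refl => exact bord'_refl x
  | tail _ h2 ih => exact bord'_step ih h2
lemma bord_s_succ (hq : 0 < q) (m : ℕ) (h : m < k) :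
    BOrd (sE ⟨m, by omega⟩ : MCG k q) (sE ⟨m + 1, by omega⟩) := by
  have h1 : Brel (sE ⟨m, by omega⟩ : MCG k q) (uE ⟨m, h⟩ ⟨0, hq⟩ ⟨0, by omega⟩) := by
    simp [Brel, sE, uE]
  have h2 : Brel (uE ⟨m, h⟩ ⟨0, hq⟩ ⟨0, by omega⟩ : MCG k q) (sE ⟨m + 1, by omega⟩) := by
    simp [Brel, sE, uE]
  exact Relation.ReflTransGen.head h1 (Relation.ReflTransGen.single h2)

lemma bord_s_le (hq : 0 < q) (a : Fin (k + 1)) :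
    ∀ bv : ℕ, ∀ hbv : bv < k + 1, a.val ≤ bv → BOrd (sE a : MCG k q) (sE ⟨bv, hbv⟩) := by
  intro bv
  induction bv with
  | zero =>
    intro hbv h
    have : a = ⟨0, hbv⟩ := Fin.ext (show a.val = 0 by omega)
    rw [← this]
    exact Relation.ReflTransGen.refl
  | succ n ih =>
    intro hbv h
    rcases Nat.lt_or_ge a.val (n + 1) with h' | h'
    · exact (ih (by omega) (by omega)).trans (bord_s_succ hq n (by omega))
    · have : a = ⟨n + 1, hbv⟩ := Fin.ext (show a.val = n + 1 by omega)
      rw [← this]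
      exact Relation.ReflTransGen.refl

lemma bord_s_le' (hq : 0 < q) (a b : Fin (k + 1)) (h : a.val ≤ b.val) :
    BOrd (sE a : MCG k q) (sE b) := by
  have := bord_s_le hq a b.val b.isLt h
  simpa using this

lemma bord_s_u (hq : 0 < q) (a : Fin (k + 1)) (i : Fin k) (p : Fin q) (j : Fin (k + 1))
    (h : a.val ≤ i.val) : BOrd (sE a : MCG k q) (uE i p j) := by
  refine (bord_s_le' hq a ⟨i.val, by omega⟩ h).trans (Relation.ReflTransGen.single ?_)
  simp [Brel, sE, uE]

lemma bord_u00_s (hq : 0 < q) (a : Fin (k + 1)) (i : Fin k) (p : Fin q) (j : Fin (k + 1))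
    (hp : p.val = 0) (hj : j.val = 0) (h : i.val < a.val) :
    BOrd (uE i p j : MCG k q) (sE a) := by
  refine (Relation.ReflTransGen.single (b := (sE ⟨i.val + 1, by omega⟩ : MCG k q)) ?_).trans
    (bord_s_le' hq _ a (show i.val + 1 ≤ a.val by omega))
  exact ⟨hp, hj, rfl⟩

lemma bord_u_u (i : Fin k) (p p' : Fin q) (j j' : Fin (k + 1))
    (h : p.val < p'.val ∨ (p.val = p'.val ∧ j.val ≤ j'.val)) :
    BOrd (uE i p j : MCG k q) (uE i p' j') := by
  by_cases he : p = p' ∧ j = j'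
  · rw [he.1, he.2]
    exact Relation.ReflTransGen.refl
  · refine Relation.ReflTransGen.single ?_
    refine ⟨rfl, ?_⟩
    rcases h with h | ⟨h1, h2⟩
    · exact Or.inl (Fin.lt_def.mpr h)
    · right
      have hp : p = p' := Fin.ext h1
      refine ⟨hp, Fin.lt_def.mpr ?_⟩
      rcases Nat.lt_or_ge j.val j'.val with h3 | h3
      · exact h3
      · exact absurd ⟨hp, Fin.ext (by omega)⟩ he

lemma bord_c_c (c c' : CIdx k)
    (h : c.val.1.val < c'.val.1.val ∨ (c.val.1.val = c'.val.1.val ∧ c.val.2.val ≤ c'.val.2.val)) :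
    BOrd (cE c : MCG k q) (cE c') := by
  by_cases he : c = c'
  · rw [he]
    exact Relation.ReflTransGen.refl
  · refine Relation.ReflTransGen.single ?_
    rcases h with h | ⟨h1, h2⟩
    · exact Or.inl (Fin.lt_def.mpr h)
    · right
      refine ⟨Fin.ext h1, Fin.lt_def.mpr ?_⟩
      rcases Nat.lt_or_ge c.val.2.val c'.val.2.val with h3 | h3
      · exact h3
      · exact absurd (Subtype.ext (Prod.ext_iff.mpr ⟨Fin.ext h1, Fin.ext (by omega)⟩)) he

lemma bord_s_c (hq : 0 < q) (a : Fin (k + 1)) (c : CIdx k) :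
    BOrd (sE a : MCG k q) (cE c) := by
  have hk : 0 < k := c.val.1.pos
  refine (bord_s_le' hq a ⟨k, by omega⟩ (show a.val ≤ k by omega)).trans ?_
  refine Relation.ReflTransGen.head (b := (cE ⟨(⟨0, hk⟩, ⟨0, hk⟩), le_refl _⟩ : MCG k q)) ?_ ?_
  · exact ⟨rfl, rfl, rfl⟩
  · refine bord_c_c _ _ ?_
    rcases Nat.eq_zero_or_pos c.val.1.val with h | h
    · exact Or.inr ⟨h.symm, Nat.zero_le _⟩
    · exact Or.inl h

lemma bord_u00_c (hq : 0 < q) (i : Fin k) (p : Fin q) (j : Fin (k + 1))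
    (hp : p.val = 0) (hj : j.val = 0) (c : CIdx k) :
    BOrd (uE i p j : MCG k q) (cE c) :=
  (bord_u00_s hq ⟨k, by omega⟩ i p j hp hj i.isLt).trans (bord_s_c hq _ c)

lemma bord'_to_bord (hq : 0 < q) {x y : MCG k q} (h : Bord' x y) : BOrd x y := by
  rcases x with xi | xc | ⟨xi, xp, xj⟩ <;> rcases y with yi | yc | ⟨yi, yp, yj⟩ <;>
      simp only [Bord'] at h
  · exact bord_s_le' hq _ _ h
  · exact bord_s_c hq _ _
  · exact bord_s_u hq _ _ _ _ h
  · exact bord_c_c _ _ h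
  · exact bord_u00_s hq _ _ _ _ h.1 h.2.1 h.2.2
  · exact bord_u00_c hq _ _ _ h.1 h.2 _
  · rcases h with ⟨h1, h2⟩ | ⟨h1, h2, h3⟩
    · have : xi = yi := Fin.ext h1
      subst this
      exact bord_u_u _ _ _ _ _ h2
    · exact (bord_u00_s hq ⟨yi.val, by omega⟩ _ _ _ h1 h2 h3).trans
        (bord_s_u hq _ _ yp yj (le_refl _))

lemma bord_iff (hq : 0 < q) {x y : MCG k q} : BOrd x y ↔ Bord' x y :=
  ⟨bord_to_bord', bord'_to_bord hq⟩

lemma bord'_antisymm {x y : MCG k q} (h1 : Bord' x y) (h2 : Bord' y x) : x = y := by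
  rcases x with xi | xc | ⟨xi, xp, xj⟩ <;> rcases y with yi | yc | ⟨yi, yp, yj⟩ <;>
      simp only [Bord'] at h1 h2
  · exact congrArg Sum.inl (Fin.ext (by omega))
  · omega
  · exact congrArg (fun t => Sum.inr (Sum.inl t))
      (Subtype.ext (Prod.ext_iff.mpr ⟨Fin.ext (by omega), Fin.ext (by omega)⟩))
  · omega
  · simp only [Sum.inr.injEq, Prod.mk.injEq]
    exact ⟨Fin.ext (by omega), Fin.ext (by omega), Fin.ext (by omega)⟩
@[simp] lemma finValMk {n m : ℕ} (h : m < n) : ((⟨m, h⟩ : Fin n) : ℕ) = m := rfl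
@[simp] lemma prodFstMk {α β : Type*} (a : α) (b : β) : (a, b).1 = a := rfl
@[simp] lemma prodSndMk {α β : Type*} (a : α) (b : β) : (a, b).2 = b := rfl

lemma exists_max (hq : 0 < q) (x : MCG k q) (hx : x ≠ sE ⟨0, Nat.succ_pos k⟩) :
    ∃ m : MCG k q, m ≠ x ∧ Bord' m x ∧ ∀ y, y ≠ x → Bord' y x → Bord' y m := by
  rcases x with i | ⟨⟨a, b⟩, hab⟩ | ⟨i, p, j⟩
  · -- x = s^i with i.val ≥ 1
    have hi : 0 < i.val := by
      simp only [sE, ne_eq, Sum.inl.injEq, Fin.ext_iff] at hx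
      omega
    refine ⟨Sum.inr (Sum.inr (⟨i.val - 1, by omega⟩, ⟨0, hq⟩, ⟨0, Nat.succ_pos k⟩)),
      by simp, ⟨rfl, rfl, show i.val - 1 < i.val by omega⟩, ?_⟩
    intro y hy hyx
    rcases y with i' | ⟨⟨a', b'⟩, hab'⟩ | ⟨i', p', j'⟩ <;>
      simp only [Bord', ne_eq, Sum.inl.injEq, Sum.inr.injEq, Subtype.mk.injEq,
        Prod.mk.injEq, Fin.ext_iff, finValMk, prodFstMk, prodSndMk, true_and, and_true] at hy hyx ⊢ <;> omega
  · -- x = c^{a,b}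
    have hab2 : a.val ≤ b.val := hab
    rcases Nat.lt_or_ge a.val b.val with h1 | h1
    · -- b > a : predecessor c^{a, b-1}
      refine ⟨Sum.inr (Sum.inl ⟨(a, ⟨b.val - 1, by omega⟩),
          by rw [Fin.le_def]; show a.val ≤ b.val - 1; omega⟩), ?_, ?_, ?_⟩
      · simp only [ne_eq, Sum.inr.injEq, Sum.inl.injEq, Subtype.mk.injEq,
          Prod.mk.injEq, Fin.ext_iff, finValMk, prodFstMk, prodSndMk, true_and, and_true]
        omega
      · simp only [Bord', finValMk, prodFstMk, prodSndMk, true_and, and_true]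
        omega
      · intro y hy hyx
        rcases y with i' | ⟨⟨a', b'⟩, hab'⟩ | ⟨i', p', j'⟩ <;>
          (try have hab3 : a'.val ≤ b'.val := hab') <;>
          simp only [Bord', ne_eq, Sum.inl.injEq, Sum.inr.injEq, Subtype.mk.injEq,
            Prod.mk.injEq, Fin.ext_iff, finValMk, prodFstMk, prodSndMk, true_and, and_true] at hy hyx ⊢ <;> omega
    · -- b = a
      rcases Nat.eq_zero_or_pos a.val with h2 | h2
      · -- x = c^{1,1}: predecessor s^{k+1}
        refine ⟨Sum.inl ⟨k, Nat.lt_succ_self k⟩, by simp, trivial, ?_⟩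
        intro y hy hyx
        rcases y with i' | ⟨⟨a', b'⟩, hab'⟩ | ⟨i', p', j'⟩ <;>
          (try have hab3 : a'.val ≤ b'.val := hab') <;>
          simp only [Bord', ne_eq, Sum.inl.injEq, Sum.inr.injEq, Subtype.mk.injEq,
            Prod.mk.injEq, Fin.ext_iff, finValMk, prodFstMk, prodSndMk, true_and, and_true] at hy hyx ⊢ <;> omega
      · -- x = c^{a,a}, a > 0 : predecessor c^{a-1, k-1}
        have hk : 0 < k := a.pos
        refine ⟨Sum.inr (Sum.inl ⟨(⟨a.val - 1, by omega⟩, ⟨k - 1, by omega⟩),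
            by rw [Fin.le_def]; show a.val - 1 ≤ k - 1; have := a.isLt; omega⟩), ?_, ?_, ?_⟩
        · simp only [ne_eq, Sum.inr.injEq, Sum.inl.injEq, Subtype.mk.injEq,
            Prod.mk.injEq, Fin.ext_iff, finValMk, prodFstMk, prodSndMk, true_and, and_true]
          omega
        · simp only [Bord', finValMk, prodFstMk, prodSndMk, true_and, and_true]
          omega
        · intro y hy hyx
          rcases y with i' | ⟨⟨a', b'⟩, hab'⟩ | ⟨i', p', j'⟩ <;>
            (try have hab3 : a'.val ≤ b'.val := hab') <;>
            simp only [Bord', ne_eq, Sum.inl.injEq, Sum.inr.injEq, Subtype.mk.injEq,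
              Prod.mk.injEq, Fin.ext_iff, finValMk, prodFstMk, prodSndMk, true_and, and_true] at hy hyx ⊢ <;> omega
  · -- x = u^i_{p,j}
    rcases Nat.eq_zero_or_pos j.val with hj | hj
    · rcases Nat.eq_zero_or_pos p.val with hp | hp
      · -- predecessor s^i
        refine ⟨Sum.inl ⟨i.val, by omega⟩, by simp, show (i.val : ℕ) ≤ i.val from le_refl _, ?_⟩
        intro y hy hyx
        rcases y with i' | ⟨⟨a', b'⟩, hab'⟩ | ⟨i', p', j'⟩ <;>
          simp only [Bord', ne_eq, Sum.inl.injEq, Sum.inr.injEq, Subtype.mk.injEq,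
            Prod.mk.injEq, Fin.ext_iff, finValMk, prodFstMk, prodSndMk, true_and, and_true] at hy hyx ⊢ <;> omega
      · -- j = 0, p > 0 : predecessor u^i_{p-1,k}
        refine ⟨Sum.inr (Sum.inr (i, ⟨p.val - 1, by omega⟩, ⟨k, Nat.lt_succ_self k⟩)), ?_, ?_, ?_⟩
        · simp only [ne_eq, Sum.inr.injEq, Prod.mk.injEq, Fin.ext_iff, finValMk, prodFstMk, prodSndMk, true_and, and_true]
          omega
        · simp only [Bord', finValMk, prodFstMk, prodSndMk, true_and, and_true]
          omega
        · intro y hy hyx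
          rcases y with i' | ⟨⟨a', b'⟩, hab'⟩ | ⟨i', p', j'⟩ <;>
            simp only [Bord', ne_eq, Sum.inl.injEq, Sum.inr.injEq, Subtype.mk.injEq,
              Prod.mk.injEq, Fin.ext_iff, finValMk, prodFstMk, prodSndMk, true_and, and_true] at hy hyx ⊢ <;> omega
    · -- j > 0 : predecessor u^i_{p,j-1}
      refine ⟨Sum.inr (Sum.inr (i, p, ⟨j.val - 1, by omega⟩)), ?_, ?_, ?_⟩
      · simp only [ne_eq, Sum.inr.injEq, Prod.mk.injEq, Fin.ext_iff, finValMk, prodFstMk, prodSndMk, true_and, and_true]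
        omega
      · simp only [Bord', finValMk, prodFstMk, prodSndMk, true_and, and_true]
        omega
      · intro y hy hyx
        rcases y with i' | ⟨⟨a', b'⟩, hab'⟩ | ⟨i', p', j'⟩ <;>
          simp only [Bord', ne_eq, Sum.inl.injEq, Sum.inr.injEq, Subtype.mk.injEq,
            Prod.mk.injEq, Fin.ext_iff, finValMk, prodFstMk, prodSndMk, true_and, and_true] at hy hyx ⊢ <;> omega
/-- Chain-colouring of the ground set by `k+1` colours. -/
def colorM : MCG k q → Fin (k + 1)
  | Sum.inl i => i
  | Sum.inr (Sum.inl _) => ⟨k, Nat.lt_succ_self k⟩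
  | Sum.inr (Sum.inr (i, _, _)) => ⟨i.val, by omega⟩

lemma color_comp (x y : MCG k q) (h : colorM x = colorM y) : Bord' x y ∨ Bord' y x := by
  rcases x with xi | ⟨⟨a, b⟩, hab⟩ | ⟨xi, xp, xj⟩ <;>
      rcases y with yi | ⟨⟨a', b'⟩, hab'⟩ | ⟨yi, yp, yj⟩ <;>
      simp only [colorM, Fin.ext_iff, finValMk] at h
  · simp only [Bord']; omega
  · exact Or.inl trivial
  · simp only [Bord']; omega
  · exact Or.inr trivial
  · simp only [Bord', prodFstMk, prodSndMk]; omega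
  · exact absurd h (by omega)
  · simp only [Bord']; omega
  · exact absurd h (by omega)
  · simp only [Bord']; omega

/-- The `k+1`-element antichain. -/
def gAnti (hk : 0 < k) (hq : 0 < q) (i : Fin (k + 1)) : MCG k q :=
  if h : i.val < k then Sum.inr (Sum.inr (⟨i.val, h⟩, ⟨0, hq⟩, ⟨1, by omega⟩))
  else Sum.inr (Sum.inl ⟨(⟨0, hk⟩, ⟨0, hk⟩), le_refl _⟩)

lemma gAnti_inj (hk : 0 < k) (hq : 0 < q) : Function.Injective (gAnti (q := q) hk hq) := by
  intro a b hab
  unfold gAnti at hab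
  by_cases ha : a.val < k <;> by_cases hb : b.val < k
  · rw [dif_pos ha, dif_pos hb] at hab
    simp only [Sum.inr.injEq, Prod.mk.injEq, Fin.ext_iff, finValMk, true_and, and_true] at hab
    exact Fin.ext (by omega)
  · rw [dif_pos ha, dif_neg hb] at hab
    exact absurd hab (by simp)
  · rw [dif_neg ha, dif_pos hb] at hab
    exact absurd hab (by simp)
  · exact Fin.ext (by omega)

lemma gAnti_incomp (hk : 0 < k) (hq : 0 < q) (a b : Fin (k + 1)) (hab : a ≠ b) :
    ¬ Bord' (gAnti (q := q) hk hq a) (gAnti hk hq b) := by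
  have hab' : a.val ≠ b.val := fun h => hab (Fin.ext h)
  unfold gAnti
  by_cases ha : a.val < k <;> by_cases hb : b.val < k
  · rw [dif_pos ha, dif_pos hb]
    simp only [Bord', Fin.ext_iff, finValMk, true_and, and_true]
    omega
  · rw [dif_pos ha, dif_neg hb]
    simp only [Bord', Fin.ext_iff, finValMk, true_and, and_true]
    omega
  · rw [dif_neg ha, dif_pos hb]
    exact fun h => h
  · have := a.isLt
    have := b.isLt
    omega
/-- the reflexive-transitive closure of `B` is a partial
order forming a cs-tree (it has minimum `s^1` and every other element covers
exactly one element) whose width is exactly `k+1`. -/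
theorem stmt10 (hk : 0 < k) (hq : 0 < q) :
    (∀ x y : MCG k q, BOrd x y → BOrd y x → x = y) ∧
    (∀ x : MCG k q, BOrd (sE ⟨0, by omega⟩) x) ∧
    (∀ x : MCG k q, x ≠ sE ⟨0, by omega⟩ →
      ∃! y : MCG k q, y ≠ x ∧ BOrd y x ∧
        ∀ z, BOrd y z → BOrd z x → z = y ∨ z = x) ∧
    (∃ S : Finset (MCG k q), IsBAntichain S ∧ S.card = k + 1) ∧
    (∀ S : Finset (MCG k q), IsBAntichain S → S.card ≤ k + 1) := by
  refine ⟨?_, ?_, ?_, ?_, ?_⟩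
  · intro x y h1 h2
    exact bord'_antisymm (bord_to_bord' h1) (bord_to_bord' h2)
  · intro x
    rcases x with i | c | ⟨i, p, j⟩
    · exact bord_s_le' hq _ _ (Nat.zero_le _)
    · exact bord_s_c hq _ _
    · exact bord_s_u hq _ _ _ _ (Nat.zero_le _)
  · intro x hx
    obtain ⟨m, hmx, hm, hmax⟩ := exists_max hq x hx
    refine ⟨m, ⟨hmx, bord'_to_bord hq hm, ?_⟩, ?_⟩
    · intro z h1 h2
      by_cases hzx : z = x
      · exact Or.inr hzx
      · exact Or.inl
          ((bord'_antisymm (bord_to_bord' h1) (hmax z hzx (bord_to_bord' h2))).symm)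
    · rintro y ⟨hyx, hy, hcov⟩
      have h1 : Bord' y m := hmax y hyx (bord_to_bord' hy)
      rcases hcov m (bord'_to_bord hq h1) (bord'_to_bord hq hm) with h | h
      · exact h.symm
      · exact absurd h hmx
  · refine ⟨Finset.image (gAnti (q := q) hk hq) Finset.univ, ?_, ?_⟩
    · intro x hx y hy hxy
      obtain ⟨a, -, ha⟩ := Finset.mem_image.mp hx
      obtain ⟨b, -, hb⟩ := Finset.mem_image.mp hy
      subst ha hb
      have hab : a ≠ b := fun h => hxy (by rw [h])
      constructor
      · intro h
        exact gAnti_incomp hk hq a b hab (bord_to_bord' h)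
      · intro h
        exact gAnti_incomp hk hq b a hab.symm (bord_to_bord' h)
    · rw [Finset.card_image_of_injective _ (gAnti_inj hk hq)]
      simp
  · intro S hS
    have hinj : Set.InjOn colorM (S : Set (MCG k q)) := by
      intro x hx y hy hcol
      by_contra hne
      have := hS x (Finset.mem_coe.mp hx) y (Finset.mem_coe.mp hy) hne
      rcases color_comp x y hcol with h | h
      · exact this.1 (bord'_to_bord hq h)
      · exact this.2 (bord'_to_bord hq h)
    have := Finset.card_le_card_of_injOn colorM
      (fun a _ => Finset.mem_univ (colorM a)) hinj
    simpa using this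
end

section
/- If σ is an intermezzo ordering of the instance (A, C) built in the Multicolor Clique reduction (satisfying B, C^1_sel, C^2_sel, C^3_sel), then for every i ∈ {1,...,k} there exists p_i ∈ {1,...,q} such that in the prefix σ' of σ ending at c^{1,1}: s^i and all elements of U^i_r with r < p_i occur, exactly the element u^i_{p_i,0} of U^i_{p_i} occurs, and no element of U^i_r with r > p_i occurs. -/
variable {k q : ℕ}

/-- σ satisfies the pair constraints `B`. -/
def SatB (σ : MCG k q ≃ Fin (Fintype.card (MCG k q))) : Prop :=
  ∀ x y : MCG k q, Brel x y → σ x < σ y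

/-- σ fulfills all (intermezzo) triples in `S`. -/
def SatT (σ : MCG k q ≃ Fin (Fintype.card (MCG k q)))
    (S : Set (MCG k q × MCG k q × MCG k q)) : Prop :=
  ∀ t ∈ S, (σ t.1 < σ t.2.1 ∧ σ t.2.1 < σ t.2.2) ∨
           (σ t.2.1 < σ t.2.2 ∧ σ t.2.2 < σ t.1)

/-- Selection triples `C¹_sel = {(s^{i+1}, u^i_{p,j}, u^i_{p+1,0})}`. -/
def Csel1 : Set (MCG k q × MCG k q × MCG k q) :=
  {t | ∃ (i : Fin k) (p : Fin q) (j : Fin (k + 1)) (hp : p.val + 1 < q),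
        1 ≤ j.val ∧
        t = (sE i.succ, uE i p j, uE i ⟨p.val + 1, hp⟩ 0)}

/-- Selection triples `C²_sel = {(u^i_{q,j}, s^i, s^{i+1})}`. -/
def Csel2 (hq : 0 < q) : Set (MCG k q × MCG k q × MCG k q) :=
  {t | ∃ (i : Fin k) (j : Fin (k + 1)), 1 ≤ j.val ∧
        t = (uE i ⟨q - 1, by omega⟩ j, sE i.castSucc, sE i.succ)}

/-- Selection triples `C³_sel = {(u^i_{p,j}, s^{i+1}, c^{1,1})}`. -/
def Csel3 (hk : 0 < k) : Set (MCG k q × MCG k q × MCG k q) :=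
  {t | ∃ (i : Fin k) (p : Fin q) (j : Fin (k + 1)),
        t = (uE i p j, sE i.succ, cP 0 0 le_rfl hk)}

/-- Verification triples `C¹_ver = {(x, c^{i,k}, c^{i+1,i+1})}`. -/
def Cver1 : Set (MCG k q × MCG k q × MCG k q) :=
  {t | ∃ (i : ℕ) (hi : i + 1 < k) (x : MCG k q),
        x ≠ cP i (k - 1) (by omega) (by omega) ∧
        x ≠ cP (i + 1) (i + 1) le_rfl hi ∧
        t = (x, cP i (k - 1) (by omega) (by omega), cP (i + 1) (i + 1) le_rfl hi)}

/-- Verification triples `C²_ver = {(u^i_{p,j}, c^{ℓ,m}, c^{ℓ,m+1})}` (for the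
stated index conditions, written for 0-indexed `i`, `ℓ`, `m`). -/
def Cver2 : Set (MCG k q × MCG k q × MCG k q) :=
  {t | ∃ (i : Fin k) (p : Fin q) (j : Fin (k + 1)) (ℓ m : ℕ)
        (hℓm : ℓ ≤ m) (hm : m + 1 < k),
        ((i.val ≠ ℓ ∧ i.val ≠ m + 1) ∨ (i.val = m + 1 ∧ j.val ≠ ℓ + 1) ∨
          (i.val = ℓ ∧ j.val ≠ m + 1)) ∧
        t = (uE i p j, cP ℓ m hℓm (by omega), cP ℓ (m + 1) (by omega) hm)}

/-- Verification triples `C³_ver`. -/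
def Cver3 : Set (MCG k q × MCG k q × MCG k q) :=
  {t | ∃ (ℓ m : ℕ) (hℓm : ℓ ≤ m) (hm : m + 1 < k) (p : Fin q),
        t = (cP ℓ (m + 1) (by omega) hm, uP ℓ (by omega) p m (by omega),
             uP ℓ (by omega) p (m + 1) (by omega)) ∨
        t = (cP ℓ (m + 1) (by omega) hm, uP (m + 1) hm p ℓ (by omega),
             uP (m + 1) hm p (ℓ + 1) (by omega))}

/-- Verification triples `C⁴_ver` (depending on the non-edges of `G`). -/
def Cver4 (Gadj : (Fin k × Fin q) → (Fin k × Fin q) → Prop) :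
    Set (MCG k q × MCG k q × MCG k q) :=
  {t | ∃ (ℓ m : ℕ) (hℓm : ℓ ≤ m) (hm : m + 1 < k) (p r : Fin q),
        ¬ Gadj (⟨ℓ, by omega⟩, p) (⟨m + 1, hm⟩, r) ∧
        (t = (uP (m + 1) hm r (ℓ + 1) (by omega), uP ℓ (by omega) p (m + 1) (by omega),
              uP ℓ (by omega) p (m + 2) (by omega)) ∨
         t = (uP ℓ (by omega) p (m + 1) (by omega), uP (m + 1) hm r (ℓ + 1) (by omega),
              uP (m + 1) hm r (ℓ + 2) (by omega)))}

/-!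
Let `p_i` be the last block `p` of color `i` whose first element `u^i_{p,0}` precedes `c^{1,1}`;
block `1` qualifies since `u^i_{1,0} ≺ s^{i+1}` by `B`. The chain `s^1 ≺ ⋯ ≺ s^{k+1} ≺ c^{1,1}`
(from `C²_sel` and `B`) puts every `s^i` in the prefix, and `B` orders each color's blocks
lexicographically, which handles the blocks other than `p_i`. By `C³_sel`, an element `u^i_{p,j}`
in the prefix already precedes `s^{i+1}`. For `j ≥ 1` this is impossible in the block `p_i`: if
`p_i < q`, the triple of `C¹_sel` then drags `u^i_{p_i+1,0}` before `s^{i+1}`, against maximality,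
and if `p_i = q`, the triple of `C²_sel` forbids it.
-/

section

variable {σ : MCG k q ≃ Fin (Fintype.card (MCG k q))}

theorem SatT.mono {S T : Set (MCG k q × MCG k q × MCG k q)} (hST : S ⊆ T) (hT : SatT σ T) :
    SatT σ S :=
  fun t ht => hT t (hST ht)

theorem SatT.intermezzo {S : Set (MCG k q × MCG k q × MCG k q)} (hS : SatT σ S)
    {x y z : MCG k q} (h : (x, y, z) ∈ S) : σ y < σ z ∧ (σ x < σ y ∨ σ z < σ x) := by
  rcases hS _ h with ⟨hxy, hyz⟩ | ⟨hyz, hzx⟩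
  · exact ⟨hyz, .inl hxy⟩
  · exact ⟨hyz, .inr hzx⟩

theorem uE_ne_cP (hk : 0 < k) (i : Fin k) (p : Fin q) (j : Fin (k + 1)) :
    uE i p j ≠ (cP 0 0 le_rfl hk : MCG k q) := by
  simp [uE, cP, cE]

theorem SatB.sE_castSucc_lt_uE (hB : SatB σ) (i : Fin k) (p : Fin q) (j : Fin (k + 1)) :
    σ (sE i.castSucc) < σ (uE i p j) :=
  hB _ _ (by simp [sE, uE, Brel])

theorem SatB.uE_lt_uE (hB : SatB σ) (i : Fin k) {p p' : Fin q} {j j' : Fin (k + 1)}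
    (h : p < p' ∨ p = p' ∧ j < j') : σ (uE i p j) < σ (uE i p' j') :=
  hB _ _ ⟨rfl, h⟩

theorem SatB.uE_zero_lt_sE_succ (hB : SatB σ) (hq : 0 < q) (i : Fin k) :
    σ (uE i ⟨0, hq⟩ 0) < σ (sE i.succ) :=
  hB _ _ ⟨rfl, rfl, by simp⟩

theorem SatB.sE_last_lt_cP (hB : SatB σ) (hk : 0 < k) :
    σ (sE (Fin.last k)) < σ (cP 0 0 le_rfl hk) :=
  hB _ _ ⟨rfl, rfl, rfl⟩

theorem sE_castSucc_lt_sE_succ (hq : 0 < q) (h2 : SatT σ (Csel2 hq)) (i : Fin k) :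
    σ (sE i.castSucc) < σ (sE i.succ) :=
  (h2.intermezzo ⟨i, ⟨1, Nat.succ_lt_succ i.pos⟩, le_rfl, rfl⟩).1

theorem sE_lt_cP (hB : SatB σ) (hk : 0 < k) (hq : 0 < q) (h2 : SatT σ (Csel2 hq))
    (i : Fin (k + 1)) : σ (sE i) < σ (cP 0 0 le_rfl hk) := by
  induction i using Fin.reverseInduction with
  | last => exact hB.sE_last_lt_cP hk
  | cast i ih => exact (sE_castSucc_lt_sE_succ hq h2 i).trans ih

theorem uE_lt_sE_succ_of_lt_cP (hk : 0 < k) (h3 : SatT σ (Csel3 hk)) {i : Fin k} {p : Fin q}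
    {j : Fin (k + 1)} (h : σ (uE i p j) < σ (cP 0 0 le_rfl hk)) :
    σ (uE i p j) < σ (sE i.succ) :=
  (h3.intermezzo ⟨i, p, j, rfl⟩).2.resolve_right h.asymm

theorem sE_succ_lt_uE_last (hB : SatB σ) (hq : 0 < q) (h2 : SatT σ (Csel2 hq)) (i : Fin k)
    {j : Fin (k + 1)} (hj : 1 ≤ j.val) : σ (sE i.succ) < σ (uE i ⟨q - 1, by omega⟩ j) :=
  (h2.intermezzo ⟨i, j, hj, rfl⟩).2.resolve_left (hB.sE_castSucc_lt_uE i _ j).asymm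

theorem uE_succ_zero_lt_sE_succ (h1 : SatT σ Csel1) {i : Fin k} {p : Fin q} {j : Fin (k + 1)}
    (hj : 1 ≤ j.val) (hp : p.val + 1 < q) (h : σ (uE i p j) < σ (sE i.succ)) :
    σ (uE i ⟨p.val + 1, hp⟩ 0) < σ (sE i.succ) :=
  (h1.intermezzo ⟨i, p, j, hp, hj, rfl⟩).2.resolve_left h.asymm

theorem exists_uE_succ_zero_lt_cP (hB : SatB σ) (hk : 0 < k) (hq : 0 < q)
    (hsel : SatT σ (Csel1 ∪ Csel2 hq ∪ Csel3 hk)) {i : Fin k} {p : Fin q} {j : Fin (k + 1)}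
    (hj : 1 ≤ j.val) (h : σ (uE i p j) < σ (cP 0 0 le_rfl hk)) :
    ∃ hp : p.val + 1 < q, σ (uE i ⟨p.val + 1, hp⟩ 0) < σ (cP 0 0 le_rfl hk) := by
  have h2 : SatT σ (Csel2 hq) := hsel.mono fun _ ht => .inl (.inr ht)
  have hs := uE_lt_sE_succ_of_lt_cP hk (hsel.mono fun _ ht => .inr ht) h
  by_cases hp : p.val + 1 < q
  · exact ⟨hp, (uE_succ_zero_lt_sE_succ (hsel.mono fun _ ht => .inl (.inl ht)) hj hp hs).trans
      (sE_lt_cP hB hk hq h2 _)⟩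
  · have hp_last : p = ⟨q - 1, by omega⟩ := Fin.ext (by simp only; omega)
    exact absurd (hp_last ▸ hs) (sE_succ_lt_uE_last hB hq h2 i hj).asymm

end

/-- selection-phase property: if σ respects `B` and the
selection triples, then for every color `i` there is an index `p_i` such that,
in the prefix of σ ending at `c^{1,1}`: `s^i` and all of `U^i_r` with `r < p_i`
occur, exactly `u^i_{p_i,0}` occurs from `U^i_{p_i}`, and nothing of `U^i_r`
with `r > p_i` occurs. -/
theorem stmt12 (hk : 0 < k) (hq : 0 < q)
    (σ : MCG k q ≃ Fin (Fintype.card (MCG k q)))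
    (hB : SatB σ)
    (hsel : SatT σ (Csel1 ∪ Csel2 hq ∪ Csel3 hk)) :
    ∀ i : Fin k, ∃ p : Fin q,
      σ (sE i.castSucc) ≤ σ (cP 0 0 le_rfl hk) ∧
      (∀ (p' : Fin q) (j : Fin (k + 1)), p' < p →
        σ (uE i p' j) ≤ σ (cP 0 0 le_rfl hk)) ∧
      (∀ j : Fin (k + 1), σ (uE i p j) ≤ σ (cP 0 0 le_rfl hk) ↔ j = 0) ∧
      (∀ (p' : Fin q) (j : Fin (k + 1)), p < p' →
        σ (cP 0 0 le_rfl hk) < σ (uE i p' j)) := by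
  intro i
  have h2 : SatT σ (Csel2 hq) := hsel.mono fun _ ht => .inl (.inr ht)
  have hs_lt_c := sE_lt_cP hB hk hq h2
  have hle_iff_lt : ∀ p j, σ (uE i p j) ≤ σ (cP 0 0 le_rfl hk) ↔ σ (uE i p j) < σ _ :=
    fun p j => (σ.injective.ne (uE_ne_cP hk i p j)).le_iff_lt
  obtain ⟨p, hp, hmax⟩ := (Finset.univ.filter fun p => σ (uE i p 0) < σ (cP 0 0 le_rfl hk))
    |>.exists_max_image id ⟨⟨0, hq⟩, by simpa using (hB.uE_zero_lt_sE_succ hq i).trans (hs_lt_c _)⟩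
  simp only [Finset.mem_filter, Finset.mem_univ, true_and, id] at hp hmax
  refine ⟨p, (hs_lt_c _).le, fun p' j hp' => ((hB.uE_lt_uE i (.inl hp')).trans hp).le,
    fun j => ⟨fun hj => ?_, fun hj => hj ▸ hp.le⟩, fun p' j hp' => ?_⟩
  · by_contra hj0
    obtain ⟨hpq, hnext⟩ := exists_uE_succ_zero_lt_cP hB hk hq hsel
      (Nat.one_le_iff_ne_zero.mpr (Fin.val_ne_zero_iff.mpr hj0)) ((hle_iff_lt p j).mp hj)
    exact absurd (hmax _ hnext) (by simp [Fin.le_def])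
  · have hc_lt : σ (cP 0 0 le_rfl hk) < σ (uE i p' 0) :=
      not_le.mp fun h => (hmax p' ((hle_iff_lt p' 0).mp h)).not_gt hp'
    rcases eq_or_ne j 0 with rfl | hj0
    · exact hc_lt
    · exact hc_lt.trans (hB.uE_lt_uE i (.inr ⟨rfl, Fin.pos_iff_ne_zero.mpr hj0⟩))
end

section
/- The Multicolor Clique reduction is correct: there is an intermezzo ordering of the constructed instance (A, C) (with C = B-constraints ∪ C^1_sel ∪ C^2_sel ∪ C^3_sel ∪ C^1_ver ∪ C^2_ver ∪ C^3_ver ∪ C^4_ver) if and only if the properly k-colored graph G, with color classes of size q each, contains a clique with exactly one vertex of each color. -/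
variable {k q : ℕ}

/-! ### Auxiliary machinery -/

abbrev K5 := ℕ ×ₗ (ℕ ×ₗ (ℕ ×ₗ (ℕ ×ₗ ℕ)))

def mk5 (a b c d e : ℕ) : K5 := toLex (a, toLex (b, toLex (c, toLex (d, e))))

lemma mk5_lt {a b c d e a' b' c' d' e' : ℕ} :
    mk5 a b c d e < mk5 a' b' c' d' e' ↔
    a < a' ∨ (a = a' ∧ (b < b' ∨ (b = b' ∧ (c < c' ∨ (c = c' ∧ (d < d' ∨ (d = d' ∧ e < e'))))))) := by
  simp [mk5, Prod.Lex.lt_iff]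

lemma mk5_inj {a b c d e a' b' c' d' e' : ℕ} :
    mk5 a b c d e = mk5 a' b' c' d' e' ↔ (a = a' ∧ b = b' ∧ c = c' ∧ d = d' ∧ e = e') := by
  simp [mk5, Prod.ext_iff]

def key (f : Fin k → Fin q) : MCG k q → K5
  | Sum.inl i => mk5 0 i.val 0 0 0
  | Sum.inr (Sum.inl c) => mk5 1 c.val.1.val c.val.2.val 0 0
  | Sum.inr (Sum.inr (i, p, j)) =>
      if p.val < (f i).val then mk5 0 i.val 1 p.val j.val
      else if (f i).val < p.val then mk5 2 1 i.val p.val j.val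
      else if j.val = 0 then mk5 0 i.val 1 p.val j.val
      else if j.val = k then mk5 2 0 i.val p.val 0
      else if j.val ≤ i.val then mk5 1 (j.val - 1) (i.val - 1) 2 p.val
      else mk5 1 i.val (j.val - 1) 1 p.val

lemma key_inj (f : Fin k → Fin q) : Function.Injective (key (q := q) f) := by
  intro x y h
  rcases x with i | c | ⟨i, p, j⟩ <;> rcases y with i' | c' | ⟨i', p', j'⟩ <;>
    simp only [key] at h <;>
    (try split_ifs at h) <;>
    rw [mk5_inj] at h <;>
    first
      | (exfalso; omega)
      | (simp only [Sum.inl.injEq, Sum.inr.injEq, Prod.mk.injEq, Subtype.ext_iff,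
          Prod.ext_iff, Fin.ext_iff]
         omega)

lemma keyB (f : Fin k → Fin q) : ∀ x y : MCG k q, Brel x y → key f x < key f y := by
  intro x y hxy
  rcases x with i | c | ⟨i, p, j⟩ <;> rcases y with i' | c' | ⟨i', p', j'⟩ <;>
    simp only [Brel] at hxy
  · -- s, c
    obtain ⟨h1, h2, h3⟩ := hxy
    simp only [key, mk5_lt]
    have := c'.val.1.isLt
    simp only [true_and, and_true, false_or, or_false, false_and, and_false, true_or, or_true]
    omega
  · -- s, u
    have := (f i').isLt
    simp only [key] <;> (try split_ifs) <;> simp only [mk5_lt] <;> (try simp only [true_and, and_true, false_or, or_false, false_and, and_false, true_or, or_true, lt_self_iff_false]) <;> first | omega | contradiction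
  · -- c, c
    rcases hxy with h | ⟨h1, h2⟩ <;>
      · simp only [key, mk5_lt, Fin.lt_def] at *
        (try simp only [true_and, and_true, false_or, or_false, false_and, and_false, true_or, or_true] at *)
        omega
  · -- u, s
    obtain ⟨h1, h2, h3⟩ := hxy
    have := (f i).isLt
    simp only [key] <;> (try split_ifs) <;> simp only [mk5_lt] <;> (try simp only [true_and, and_true, false_or, or_false, false_and, and_false, true_or, or_true, lt_self_iff_false]) <;> first | omega | contradiction
  · -- u, u
    obtain ⟨rfl, h2⟩ := hxy
    have h2 : p.val < p'.val ∨ (p.val = p'.val ∧ j.val < j'.val) := by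
      rcases h2 with h | ⟨h, h'⟩
      · exact Or.inl h
      · exact Or.inr ⟨by rw [h], h'⟩
    have := (f i).isLt
    have := p.isLt
    have := p'.isLt
    have := j.isLt
    have := j'.isLt
    simp only [key] <;> (try split_ifs) <;> simp only [mk5_lt] <;> (try simp only [true_and, and_true, false_or, or_false, false_and, and_false, true_or, or_true, lt_self_iff_false]) <;> first | omega | contradiction

section Families

variable {f : Fin k → Fin q}

lemma keyCsel1 (t) (h : t ∈ (Csel1 : Set (MCG k q × MCG k q × MCG k q))) :
    (key f t.1 < key f t.2.1 ∧ key f t.2.1 < key f t.2.2) ∨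
    (key f t.2.1 < key f t.2.2 ∧ key f t.2.2 < key f t.1) := by
  obtain ⟨i, p, j, hp, hj, rfl⟩ := h
  have := (f i).isLt
  simp only [key, sE, uE, Fin.val_succ, Fin.val_mk, Fin.val_zero] <;>
    split_ifs <;> simp only [mk5_lt] <;> (try simp only [true_and, and_true, false_or, or_false, false_and, and_false, true_or, or_true, lt_self_iff_false]) <;> first | omega | contradiction

lemma keyCsel2 (hq : 0 < q) (t) (h : t ∈ (Csel2 hq : Set (MCG k q × MCG k q × MCG k q))) :
    (key f t.1 < key f t.2.1 ∧ key f t.2.1 < key f t.2.2) ∨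
    (key f t.2.1 < key f t.2.2 ∧ key f t.2.2 < key f t.1) := by
  obtain ⟨i, j, hj, rfl⟩ := h
  have := (f i).isLt
  have := j.isLt
  have := i.isLt
  simp only [key, sE, uE, Fin.val_succ, Fin.val_mk, Fin.coe_castSucc] <;>
    split_ifs <;> simp only [mk5_lt] <;> (try simp only [true_and, and_true, false_or, or_false, false_and, and_false, true_or, or_true, lt_self_iff_false]) <;> first | omega | contradiction

lemma keyCsel3 (hk : 0 < k) (t) (h : t ∈ (Csel3 hk : Set (MCG k q × MCG k q × MCG k q))) :
    (key f t.1 < key f t.2.1 ∧ key f t.2.1 < key f t.2.2) ∨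
    (key f t.2.1 < key f t.2.2 ∧ key f t.2.2 < key f t.1) := by
  obtain ⟨i, p, j, rfl⟩ := h
  have := (f i).isLt
  have := i.isLt
  have := j.isLt
  simp only [key, sE, uE, cP, cE, Fin.val_succ, Fin.val_mk] <;>
    split_ifs <;> simp only [mk5_lt] <;> (try simp only [true_and, and_true, false_or, or_false, false_and, and_false, true_or, or_true, lt_self_iff_false]) <;> first | omega | contradiction

lemma keyCver1 (t) (h : t ∈ (Cver1 : Set (MCG k q × MCG k q × MCG k q))) :
    (key f t.1 < key f t.2.1 ∧ key f t.2.1 < key f t.2.2) ∨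
    (key f t.2.1 < key f t.2.2 ∧ key f t.2.2 < key f t.1) := by
  obtain ⟨i, hi, x, hx1, hx2, rfl⟩ := h
  rcases x with i' | c' | ⟨i', p', j'⟩
  · simp only [key, cP, cE, Fin.val_mk] <;> (try split_ifs) <;> simp only [mk5_lt] <;> (try simp only [true_and, and_true, false_or, or_false, false_and, and_false, true_or, or_true, lt_self_iff_false]) <;> first | omega | contradiction
  · -- c case: need x distinct from the two endpoints
    have hx1' : ¬(c'.val.1.val = i ∧ c'.val.2.val = k - 1) := by
      intro ⟨ha, hb⟩
      exact hx1 (by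
        simp only [cP, cE, Sum.inr.injEq, Sum.inl.injEq, Subtype.ext_iff, Prod.ext_iff,
          Fin.ext_iff, Fin.val_mk]
        exact ⟨ha, hb⟩)
    have hx2' : ¬(c'.val.1.val = i + 1 ∧ c'.val.2.val = i + 1) := by
      intro ⟨ha, hb⟩
      exact hx2 (by
        simp only [cP, cE, Sum.inr.injEq, Sum.inl.injEq, Subtype.ext_iff, Prod.ext_iff,
          Fin.ext_iff, Fin.val_mk]
        exact ⟨ha, hb⟩)
    have h1 := c'.val.1.isLt
    have h2 := c'.val.2.isLt
    have h3 : c'.val.1.val ≤ c'.val.2.val := c'.prop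
    simp only [key, cP, cE, Fin.val_mk] <;> (try split_ifs) <;> simp only [mk5_lt] <;> (try simp only [true_and, and_true, false_or, or_false, false_and, and_false, true_or, or_true, lt_self_iff_false]) <;> first | omega | contradiction
  · have := (f i').isLt
    have := i'.isLt
    have := j'.isLt
    simp only [key, cP, cE, uE, Fin.val_mk] <;> (try split_ifs) <;> simp only [mk5_lt] <;> (try simp only [true_and, and_true, false_or, or_false, false_and, and_false, true_or, or_true, lt_self_iff_false]) <;> first | omega | contradiction

lemma keyCver2 (t) (h : t ∈ (Cver2 : Set (MCG k q × MCG k q × MCG k q))) :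
    (key f t.1 < key f t.2.1 ∧ key f t.2.1 < key f t.2.2) ∨
    (key f t.2.1 < key f t.2.2 ∧ key f t.2.2 < key f t.1) := by
  obtain ⟨i, p, j, l, m, hlm, hm, hcond, rfl⟩ := h
  have := (f i).isLt
  have := i.isLt
  have := j.isLt
  simp only [key, cP, cE, uE, Fin.val_mk] <;> (try split_ifs) <;> simp only [mk5_lt] <;> (try simp only [true_and, and_true, false_or, or_false, false_and, and_false, true_or, or_true, lt_self_iff_false]) <;> first | omega | contradiction

lemma keyCver3 (t) (h : t ∈ (Cver3 : Set (MCG k q × MCG k q × MCG k q))) :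
    (key f t.1 < key f t.2.1 ∧ key f t.2.1 < key f t.2.2) ∨
    (key f t.2.1 < key f t.2.2 ∧ key f t.2.2 < key f t.1) := by
  obtain ⟨l, m, hlm, hm, p, rfl | rfl⟩ := h <;>
  · have h1 := (f ⟨l, by omega⟩).isLt
    have h2 := (f ⟨m + 1, by omega⟩).isLt
    simp only [key, cP, cE, uP, uE, Fin.val_mk] <;> (try split_ifs) <;>
      simp only [mk5_lt] <;> (try simp only [true_and, and_true, false_or, or_false, false_and, and_false, true_or, or_true, lt_self_iff_false]) <;> first | omega | contradiction

set_option maxHeartbeats 2000000 in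
lemma keyCver4 {Gadj : (Fin k × Fin q) → (Fin k × Fin q) → Prop}
    (hcl : ∀ i i' : Fin k, i ≠ i' → Gadj (i, f i) (i', f i'))
    (t) (h : t ∈ (Cver4 Gadj : Set (MCG k q × MCG k q × MCG k q))) :
    (key f t.1 < key f t.2.1 ∧ key f t.2.1 < key f t.2.2) ∨
    (key f t.2.1 < key f t.2.2 ∧ key f t.2.2 < key f t.1) := by
  obtain ⟨l, m, hlm, hm, p, r, hG, ht⟩ := h
  have hne : p.val ≠ (f ⟨l, by omega⟩).val ∨ r.val ≠ (f ⟨m + 1, hm⟩).val := by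
    by_contra hc
    push_neg at hc
    exact hG (by
      rw [show p = f ⟨l, by omega⟩ from Fin.ext hc.1,
          show r = f ⟨m + 1, hm⟩ from Fin.ext hc.2]
      exact hcl _ _ (by simp only [ne_eq, Fin.ext_iff, Fin.val_mk]; omega))
  have h1 := (f ⟨l, show l < k by omega⟩).isLt
  have h2 := (f ⟨m + 1, hm⟩).isLt
  have h3 := p.isLt
  have h4 := r.isLt
  rcases ht with rfl | rfl <;>
    · simp only [key, uP, uE, Fin.val_mk] <;> (try split_ifs) <;> simp only [mk5_lt] <;> (try simp only [true_and, and_true, false_or, or_false, false_and, and_false, true_or, or_true, lt_self_iff_false]) <;> first | omega | contradiction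

end Families

def W (k q : ℕ) := MCG k q

lemma backward (hk : 0 < k) (hq : 0 < q)
    (Gadj : (Fin k × Fin q) → (Fin k × Fin q) → Prop)
    (f : Fin k → Fin q) (hcl : ∀ i i' : Fin k, i ≠ i' → Gadj (i, f i) (i', f i')) :
    ∃ σ : MCG k q ≃ Fin (Fintype.card (MCG k q)), SatB σ ∧
      SatT σ (Csel1 ∪ Csel2 hq ∪ Csel3 hk ∪ Cver1 ∪ Cver2 ∪ Cver3 ∪ Cver4 Gadj) := by
  letI : Fintype (W k q) := inferInstanceAs (Fintype (MCG k q))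
  letI : LinearOrder (W k q) := LinearOrder.lift' (β := K5) (key f) (key_inj f)
  let e : Fin (Fintype.card (MCG k q)) ≃o W k q := monoEquivOfFin (W k q) rfl
  have hσ : ∀ x y : MCG k q, e.symm.toEquiv x < e.symm.toEquiv y ↔ key f x < key f y := by
    intro x y
    exact e.symm.lt_iff_lt
  refine ⟨e.symm.toEquiv, ?_, ?_⟩
  · intro x y hxy
    exact (hσ x y).mpr (keyB f x y hxy)
  · intro t ht
    simp only [Set.mem_union] at ht
    have key_t : (key f t.1 < key f t.2.1 ∧ key f t.2.1 < key f t.2.2) ∨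
        (key f t.2.1 < key f t.2.2 ∧ key f t.2.2 < key f t.1) := by
      rcases ht with ((((((h | h) | h) | h) | h) | h) | h)
      · exact keyCsel1 t h
      · exact keyCsel2 hq t h
      · exact keyCsel3 hk t h
      · exact keyCver1 t h
      · exact keyCver2 t h
      · exact keyCver3 t h
      · exact keyCver4 hcl t h
    rcases key_t with ⟨h1, h2⟩ | ⟨h1, h2⟩
    · exact Or.inl ⟨(hσ _ _).mpr h1, (hσ _ _).mpr h2⟩
    · exact Or.inr ⟨(hσ _ _).mpr h1, (hσ _ _).mpr h2⟩
section ForwardAux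

variable {k q : ℕ}

def USet (hk : 0 < k) (hq : 0 < q) (Gadj : (Fin k × Fin q) → (Fin k × Fin q) → Prop) :
    Set (MCG k q × MCG k q × MCG k q) :=
  Csel1 ∪ Csel2 hq ∪ Csel3 hk ∪ Cver1 ∪ Cver2 ∪ Cver3 ∪ Cver4 Gadj

variable {hk : 0 < k} {hq : 0 < q} {Gadj : (Fin k × Fin q) → (Fin k × Fin q) → Prop}
  {σ : MCG k q ≃ Fin (Fintype.card (MCG k q))}

lemma memU1 {t} (h : t ∈ (Csel1 : Set (MCG k q × MCG k q × MCG k q))) : t ∈ USet hk hq Gadj := by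
  simp only [USet, Set.mem_union]; tauto
lemma memU2 {t} (h : t ∈ Csel2 hq) : t ∈ USet hk hq Gadj := by
  simp only [USet, Set.mem_union]; tauto
lemma memU3 {t} (h : t ∈ Csel3 hk) : t ∈ USet hk hq Gadj := by
  simp only [USet, Set.mem_union]; tauto
lemma memU4 {t} (h : t ∈ (Cver1 : Set (MCG k q × MCG k q × MCG k q))) : t ∈ USet hk hq Gadj := by
  simp only [USet, Set.mem_union]; tauto
lemma memU5 {t} (h : t ∈ (Cver2 : Set (MCG k q × MCG k q × MCG k q))) : t ∈ USet hk hq Gadj := by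
  simp only [USet, Set.mem_union]; tauto
lemma memU6 {t} (h : t ∈ (Cver3 : Set (MCG k q × MCG k q × MCG k q))) : t ∈ USet hk hq Gadj := by
  simp only [USet, Set.mem_union]; tauto
lemma memU7 {t} (h : t ∈ Cver4 Gadj) : t ∈ USet hk hq Gadj := by
  simp only [USet, Set.mem_union]; tauto

lemma o_ne (σ : MCG k q ≃ Fin (Fintype.card (MCG k q))) {x y : MCG k q} (h : x ≠ y) :
    σ x < σ y ∨ σ y < σ x := by
  rcases lt_trichotomy (σ x) (σ y) with h1 | h1 | h1
  · exact Or.inl h1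
  · exact absurd (σ.injective h1) h
  · exact Or.inr h1

/-- s before u of same color. -/
lemma bS_U (hB : SatB σ) (i : ℕ) (hi : i < k) (p : Fin q) (j : ℕ) (hj : j < k + 1) :
    σ (sE ⟨i, by omega⟩) < σ (uP i hi p j hj) := hB _ _ rfl

/-- lex order within a color class. -/
lemma bU_U (hB : SatB σ) (i : ℕ) (hi : i < k) (p p' : Fin q) (j j' : ℕ)
    (hj : j < k + 1) (hj' : j' < k + 1)
    (h : p.val < p'.val ∨ (p.val = p'.val ∧ j < j')) :
    σ (uP i hi p j hj) < σ (uP i hi p' j' hj') := by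
  refine hB _ _ ⟨rfl, ?_⟩
  rcases h with h | ⟨h1, h2⟩
  · exact Or.inl (Fin.lt_def.mpr h)
  · exact Or.inr ⟨Fin.ext h1, Fin.mk_lt_mk.mpr h2⟩

/-- first u of a color before next s. -/
lemma bU_S (hB : SatB σ) (hq : 0 < q) (i : ℕ) (hi : i < k) :
    σ (uP i hi ⟨0, hq⟩ 0 (by omega)) < σ (sE ⟨i + 1, by omega⟩) := hB _ _ ⟨rfl, rfl, rfl⟩

/-- lex order on the c's. -/
lemma bC_C (hB : SatB σ) (l m : ℕ) (h1 : l ≤ m) (h2 : m < k) (l' m' : ℕ)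
    (h1' : l' ≤ m') (h2' : m' < k) (h : l < l' ∨ (l = l' ∧ m < m')) :
    σ (cP l m h1 h2) < σ (cP l' m' h1' h2') := by
  refine hB _ _ ?_
  rcases h with h | ⟨ha, hb⟩
  · exact Or.inl (Fin.mk_lt_mk.mpr h)
  · exact Or.inr ⟨Fin.ext ha, Fin.mk_lt_mk.mpr hb⟩

lemma bS_C (hB : SatB σ) (hk : 0 < k) :
    σ (sE ⟨k, by omega⟩) < σ (cP 0 0 le_rfl hk) := hB _ _ ⟨rfl, rfl, rfl⟩

/-- consecutive s's. -/
lemma sStep (hB : SatB σ) (hT : SatT σ (USet hk hq Gadj)) (i : ℕ) (hi : i < k) :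
    σ (sE ⟨i, by omega⟩) < σ (sE ⟨i + 1, by omega⟩) := by
  have ht := hT _ (memU2 (hk := hk) (Gadj := Gadj)
    ⟨⟨i, hi⟩, ⟨1, by omega⟩, le_rfl, rfl⟩)
  rcases ht with ⟨hx, hyz⟩ | ⟨hyz, _⟩
  · exact absurd hx (lt_asymm (bS_U hB i hi _ 1 (by omega)))
  · exact hyz

lemma sChain (hB : SatB σ) (hT : SatT σ (USet hk hq Gadj)) (a b : ℕ) (hab : a < b)
    (hb : b ≤ k) : σ (sE ⟨a, by omega⟩) < σ (sE ⟨b, by omega⟩) := by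
  induction b, hab using Nat.le_induction with
  | base => exact sStep hB hT a (by omega)
  | succ b hab ih =>
      exact lt_trans (ih (by omega)) (sStep hB hT b (by omega))

lemma sC_C (hB : SatB σ) (hT : SatT σ (USet hk hq Gadj)) (a : ℕ) (ha : a ≤ k)
    (l m : ℕ) (h1 : l ≤ m) (h2 : m < k) :
    σ (sE ⟨a, by omega⟩) < σ (cP l m h1 h2) := by
  have h3 : σ (sE ⟨k, by omega⟩) < σ (cP 0 0 (le_refl 0) (by omega)) := bS_C hB (by omega)
  have h4 : σ (sE ⟨a, by omega⟩) < σ (cP 0 0 (le_refl 0) (by omega)) := by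
    rcases Nat.lt_or_ge a k with h | h
    · exact lt_trans (sChain hB hT a k h le_rfl) h3
    · have : a = k := by omega
      subst this; exact h3
  rcases Nat.eq_zero_or_pos (l + m) with h5 | h5
  · have hl : l = 0 := by omega
    have hm : m = 0 := by omega
    subst hl; subst hm; exact h4
  · exact lt_trans h4 (bC_C hB 0 0 le_rfl (by omega) l m h1 h2 (by omega))

end ForwardAux

section ForwardSel

variable {k q : ℕ} {hk : 0 < k} {hq : 0 < q}
  {Gadj : (Fin k × Fin q) → (Fin k × Fin q) → Prop}
  {σ : MCG k q ≃ Fin (Fintype.card (MCG k q))}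

def selSet (σ : MCG k q ≃ Fin (Fintype.card (MCG k q))) (i : Fin k) : Finset (Fin q) :=
  Finset.univ.filter (fun p : Fin q => σ (uE i p 0) < σ (sE i.succ))

lemma selNE (hq : 0 < q) (hB : SatB σ) (i : Fin k) : (selSet σ i).Nonempty :=
  ⟨⟨0, hq⟩, Finset.mem_filter.mpr ⟨Finset.mem_univ _, hB _ _ ⟨rfl, rfl, rfl⟩⟩⟩

/-- The selected vertex of color `i`. -/
noncomputable def sel (σ : MCG k q ≃ Fin (Fintype.card (MCG k q))) (hq : 0 < q)
    (hB : SatB σ) (i : Fin k) : Fin q :=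
  (selSet σ i).max' (selNE hq hB i)

lemma sel_lt (hB : SatB σ) (i : Fin k) :
    σ (uE i (sel σ hq hB i) 0) < σ (sE i.succ) :=
  (Finset.mem_filter.mp (Finset.max'_mem (selSet σ i) (selNE hq hB i))).2

lemma sel_max (hB : SatB σ) (i : Fin k) (p : Fin q) (h : (sel σ hq hB i).val < p.val) :
    σ (sE i.succ) < σ (uE i p 0) := by
  have hnot : ¬ σ (uE i p 0) < σ (sE i.succ) := by
    intro hmem
    have hle := Finset.le_max' (selSet σ i) p
      (Finset.mem_filter.mpr ⟨Finset.mem_univ _, hmem⟩)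
    exact absurd (lt_of_lt_of_le (Fin.lt_def.mpr h) hle) (lt_irrefl _)
  rcases o_ne σ (x := sE i.succ) (y := uE i p 0) (by simp [sE, uE]) with h1 | h1
  · exact h1
  · exact absurd h1 hnot

lemma selU1 (hB : SatB σ) (hT : SatT σ (USet hk hq Gadj)) (i : Fin k) (j : Fin (k + 1))
    (hj : 1 ≤ j.val) : σ (sE i.succ) < σ (uE i (sel σ hq hB i) j) := by
  have h1 : σ (sE i.succ) < σ (uE i (sel σ hq hB i) ⟨1, by omega⟩) := by
    by_cases hp : (sel σ hq hB i).val + 1 < q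
    · have ht := hT _ (memU1 (hk := hk) (hq := hq) (Gadj := Gadj)
        ⟨i, sel σ hq hB i, ⟨1, by omega⟩, hp, le_rfl, rfl⟩)
      rcases ht with ⟨h1, _⟩ | ⟨_, h2⟩
      · exact h1
      · exact absurd h2 (lt_asymm (sel_max (hq := hq) hB i ⟨(sel σ hq hB i).val + 1, hp⟩
          (by simp)))
    · have hsel : (sel σ hq hB i).val = q - 1 := by
        have := (sel σ hq hB i).isLt; omega
      have ht := hT _ (memU2 (hk := hk) (Gadj := Gadj)
        ⟨i, ⟨1, by omega⟩, le_rfl, rfl⟩)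
      rcases ht with ⟨h1, _⟩ | ⟨_, h2⟩
      · exact absurd h1 (lt_asymm (hB (sE i.castSucc) (uE i ⟨q - 1, by omega⟩ ⟨1, by omega⟩) rfl))
      · have heq : (⟨q - 1, by omega⟩ : Fin q) = sel σ hq hB i := Fin.ext (by
          simp only [Fin.val_mk]; omega)
        rwa [heq] at h2
  rcases Nat.lt_or_ge 1 j.val with h2 | h2
  · exact lt_trans h1 (hB _ _ ⟨rfl, Or.inr ⟨rfl, Fin.lt_def.mpr (by simpa using h2)⟩⟩)
  · have : j = ⟨1, by omega⟩ := Fin.ext (by simp only [Fin.val_mk]; omega)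
    rwa [this]

lemma selU2 (hB : SatB σ) (hT : SatT σ (USet hk hq Gadj)) (i : Fin k) (p : Fin q)
    (j : Fin (k + 1))
    (h : (sel σ hq hB i).val < p.val ∨ (p = sel σ hq hB i ∧ 1 ≤ j.val)) :
    σ (cP 0 0 le_rfl hk) < σ (uE i p j) := by
  have hsu : σ (sE i.succ) < σ (uE i p j) := by
    rcases h with h | ⟨rfl, hj⟩
    · rcases Nat.eq_zero_or_pos j.val with hj | hj
      · have hj0 : j = 0 := Fin.ext (by simpa using hj)
        subst hj0; exact sel_max (hq := hq) hB i p h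
      · exact lt_trans (sel_max (hq := hq) hB i p h)
          (hB _ _ ⟨rfl, Or.inr ⟨rfl, Fin.lt_def.mpr (by simpa using hj)⟩⟩)
    · exact selU1 hB hT i j hj
  have ht := hT _ (memU3 (hq := hq) (Gadj := Gadj) ⟨i, p, j, rfl⟩)
  rcases ht with ⟨h1, _⟩ | ⟨_, h2⟩
  · exact absurd h1 (lt_asymm hsu)
  · exact h2

end ForwardSel

section ForwardLoc

variable {k q : ℕ} {hk : 0 < k} {hq : 0 < q}
  {Gadj : (Fin k × Fin q) → (Fin k × Fin q) → Prop}
  {σ : MCG k q ≃ Fin (Fintype.card (MCG k q))}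

lemma cP_congr {l m l' m' : ℕ} {h1 : l ≤ m} {h2 : m < k} {h1' : l' ≤ m'} {h2' : m' < k}
    (hl : l = l') (hm : m = m') : cP (q := q) l m h1 h2 = cP l' m' h1' h2' := by
  subst hl; subst hm; rfl

lemma notBetweenRow (hT : SatT σ (USet hk hq Gadj)) (i : ℕ) (hi : i < k) (p : Fin q)
    (j : ℕ) (hj : j < k + 1) (l m : ℕ) (hlm : l ≤ m) (hm : m + 1 < k)
    (hcond : ¬(i = l ∧ j = m + 1) ∧ ¬(i = m + 1 ∧ j = l + 1)) :
    σ (uP i hi p j hj) < σ (cP l m hlm (by omega)) ∨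
      σ (cP l (m + 1) (by omega) hm) < σ (uP i hi p j hj) := by
  have ht := hT _ (memU5 (hk := hk) (hq := hq) (Gadj := Gadj)
    ⟨⟨i, hi⟩, p, ⟨j, hj⟩, l, m, hlm, hm, by simp only [Fin.val_mk]; omega, rfl⟩)
  rcases ht with ⟨h1, _⟩ | ⟨_, h2⟩
  · exact Or.inl h1
  · exact Or.inr h2

lemma notBetweenTrans (hT : SatT σ (USet hk hq Gadj)) (x : MCG k q) (l : ℕ)
    (hl : l + 1 < k)
    (hx1 : x ≠ cP l (k - 1) (by omega) (by omega))
    (hx2 : x ≠ cP (l + 1) (l + 1) le_rfl hl) :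
    σ x < σ (cP l (k - 1) (by omega) (by omega)) ∨
      σ (cP (l + 1) (l + 1) le_rfl hl) < σ x := by
  have ht := hT _ (memU4 (hk := hk) (hq := hq) (Gadj := Gadj)
    ⟨l, hl, x, hx1, hx2, rfl⟩)
  rcases ht with ⟨h1, _⟩ | ⟨_, h2⟩
  · exact Or.inl h1
  · exact Or.inr h2

lemma ver3a_use (hT : SatT σ (USet hk hq Gadj)) (l m : ℕ) (hlm : l ≤ m)
    (hm : m + 1 < k) (p : Fin q)
    (hyc : σ (uP l (by omega) p m (by omega)) < σ (cP l (m + 1) (by omega) hm)) :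
    σ (uP l (by omega) p (m + 1) (by omega)) < σ (cP l (m + 1) (by omega) hm) := by
  have ht := hT _ (memU6 (hk := hk) (hq := hq) (Gadj := Gadj)
    ⟨l, m, hlm, hm, p, Or.inl rfl⟩)
  rcases ht with ⟨h1, _⟩ | ⟨_, h2⟩
  · exact absurd h1 (lt_asymm hyc)
  · exact h2

lemma ver3b_use (hT : SatT σ (USet hk hq Gadj)) (l m : ℕ) (hlm : l ≤ m)
    (hm : m + 1 < k) (p : Fin q)
    (hyc : σ (uP (m + 1) hm p l (by omega)) < σ (cP l (m + 1) (by omega) hm)) :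
    σ (uP (m + 1) hm p (l + 1) (by omega)) < σ (cP l (m + 1) (by omega) hm) := by
  have ht := hT _ (memU6 (hk := hk) (hq := hq) (Gadj := Gadj)
    ⟨l, m, hlm, hm, p, Or.inr rfl⟩)
  rcases ht with ⟨h1, _⟩ | ⟨_, h2⟩
  · exact absurd h1 (lt_asymm hyc)
  · exact h2

set_option maxHeartbeats 1600000 in
/-- Localization: a `u`-element above `c^{0,0}` whose allowed gaps all start at or
after the target `c` must lie above the target. -/
lemma loc (hB : SatB σ) (hT : SatT σ (USet hk hq Gadj)) (i : ℕ) (hi : i < k)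
    (p : Fin q) (j : ℕ) (hj : j < k + 1)
    (hc0 : σ (cP 0 0 le_rfl hk) < σ (uP i hi p j hj))
    (a b : ℕ) (hab : a ≤ b) (hb : b < k)
    (hallow : ∀ l m : ℕ, l ≤ m → m + 1 < k →
      ((i = l ∧ j = m + 1) ∨ (i = m + 1 ∧ j = l + 1)) → ¬(l < a ∨ (l = a ∧ m < b))) :
    σ (cP a b hab hb) < σ (uP i hi p j hj) := by
  by_contra hcon
  have hu_lt : σ (uP i hi p j hj) < σ (cP a b hab hb) := by
    rcases o_ne σ (x := uP i hi p j hj) (y := cP a b hab hb) (by simp [uP, uE, cP, cE])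
      with h | h
    · exact h
    · exact absurd h hcon
  classical
  set D := Finset.univ.filter (fun d : CIdx k => σ (cE d) < σ (uP i hi p j hj)) with hD
  have hD0 : (⟨(⟨0, hk⟩, ⟨0, hk⟩), le_rfl⟩ : CIdx k) ∈ D :=
    Finset.mem_filter.mpr ⟨Finset.mem_univ _, hc0⟩
  obtain ⟨d, hdD, hdmax⟩ := D.exists_max_image (fun d => σ (cE d)) (⟨_, hD0⟩ : D.Nonempty)
  have hdu : σ (cE d) < σ (uP i hi p j hj) := (Finset.mem_filter.mp hdD).2
  have hd1 : d.val.1.val ≤ d.val.2.val := d.prop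
  have hd2 : d.val.2.val < k := d.val.2.isLt
  have hdeq : cP (q := q) d.val.1.val d.val.2.val hd1 hd2 = cE d := rfl
  -- d is lexicographically below the target
  have hdlex : d.val.1.val < a ∨ (d.val.1.val = a ∧ d.val.2.val < b) := by
    by_contra hcon2
    push_neg at hcon2
    have hcase : (a < d.val.1.val ∨ (a = d.val.1.val ∧ b < d.val.2.val)) ∨
        (a = d.val.1.val ∧ b = d.val.2.val) := by omega
    rcases hcase with h | ⟨h1, h2⟩
    · have : σ (cP a b hab hb) < σ (cE d) := by
        rw [← hdeq]
        exact bC_C hB a b hab hb _ _ hd1 hd2 h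
      exact absurd (lt_trans this hdu) (lt_asymm hu_lt)
    · have : cP (q := q) a b hab hb = cE d :=
        (cP_congr (by omega) (by omega)).trans hdeq
      rw [this] at hu_lt
      exact absurd hdu (lt_asymm hu_lt)
  by_cases hdm : d.val.2.val + 1 < k
  · -- successor in the same row
    have hd'1 : d.val.1.val ≤ d.val.2.val + 1 := by omega
    have hnotmem : ¬ σ (cP d.val.1.val (d.val.2.val + 1) hd'1 hdm) < σ (uP i hi p j hj) := by
      intro hmem
      have hle := hdmax _ (Finset.mem_filter.mpr ⟨Finset.mem_univ
        (⟨(⟨d.val.1.val, by omega⟩, ⟨d.val.2.val + 1, hdm⟩), Fin.mk_le_mk.mpr hd'1⟩ : CIdx k),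
        hmem⟩)
      have hlt : σ (cE d) < σ (cP d.val.1.val (d.val.2.val + 1) hd'1 hdm) := by
        rw [← hdeq]
        exact bC_C hB _ _ hd1 hd2 _ _ hd'1 hdm (by omega)
      exact absurd (lt_of_lt_of_le hlt hle) (lt_irrefl _)
    have hu_d' : σ (uP i hi p j hj) < σ (cP d.val.1.val (d.val.2.val + 1) hd'1 hdm) := by
      rcases o_ne σ (x := uP i hi p j hj) (y := cP d.val.1.val (d.val.2.val + 1) hd'1 hdm)
        (by simp [uP, uE, cP, cE]) with h | h
      · exact h
      · exact absurd h hnotmem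
    by_cases hcond : (i = d.val.1.val ∧ j = d.val.2.val + 1) ∨
        (i = d.val.2.val + 1 ∧ j = d.val.1.val + 1)
    · exact absurd hdlex (hallow _ _ hd1 hdm hcond)
    · rcases notBetweenRow (hk := hk) (hq := hq) hT i hi p j hj d.val.1.val d.val.2.val
        hd1 hdm ⟨fun hc => hcond (Or.inl hc), fun hc => hcond (Or.inr hc)⟩ with h | h
      · rw [hdeq] at h
        exact absurd h (lt_asymm hdu)
      · exact absurd h (lt_asymm hu_d')
  · -- d ends its row : d.2 = k - 1
    have hdm' : d.val.2.val = k - 1 := by omega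
    by_cases hdl : d.val.1.val + 1 < k
    · -- row transition successor
      have hnotmem : ¬ σ (cP (d.val.1.val + 1) (d.val.1.val + 1) le_rfl hdl) <
          σ (uP i hi p j hj) := by
        intro hmem
        have hle := hdmax _ (Finset.mem_filter.mpr ⟨Finset.mem_univ
          (⟨(⟨d.val.1.val + 1, hdl⟩, ⟨d.val.1.val + 1, hdl⟩), le_rfl⟩ : CIdx k), hmem⟩)
        have hlt : σ (cE d) < σ (cP (d.val.1.val + 1) (d.val.1.val + 1) le_rfl hdl) := by
          rw [← hdeq]
          exact bC_C hB _ _ hd1 hd2 _ _ le_rfl hdl (by omega)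
        exact absurd (lt_of_lt_of_le hlt hle) (lt_irrefl _)
      have hu_d' : σ (uP i hi p j hj) < σ (cP (d.val.1.val + 1) (d.val.1.val + 1) le_rfl hdl) := by
        rcases o_ne σ (x := uP i hi p j hj) (y := cP (d.val.1.val + 1) (d.val.1.val + 1) le_rfl hdl)
          (by simp [uP, uE, cP, cE]) with h | h
        · exact h
        · exact absurd h hnotmem
      rcases notBetweenTrans (hk := hk) (hq := hq) hT (uP i hi p j hj) d.val.1.val hdl
        (by simp [uP, uE, cP, cE]) (by simp [uP, uE, cP, cE]) with h | h
      · have heq2 : cP (q := q) d.val.1.val (k - 1) (by omega) (by omega) = cE d :=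
          (cP_congr rfl (by omega)).trans hdeq
        rw [heq2] at h
        exact absurd h (lt_asymm hdu)
      · exact absurd h (lt_asymm hu_d')
    · -- d is the lexicographic maximum, contradiction with hdlex
      omega

end ForwardLoc

section ForwardChains

variable {k q : ℕ} {hk : 0 < k} {hq : 0 < q}
  {Gadj : (Fin k × Fin q) → (Fin k × Fin q) → Prop}
  {σ : MCG k q ≃ Fin (Fintype.card (MCG k q))}

lemma chainB (hB : SatB σ) (hT : SatT σ (USet hk hq Gadj)) (f : Fin k → Fin q)
    (hf0 : ∀ (i : ℕ) (hi : i < k),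
      σ (uP i hi (f ⟨i, hi⟩) 0 (by omega)) < σ (sE ⟨i + 1, by omega⟩)) :
    ∀ (l m : ℕ) (hlm : l ≤ m) (hm : m + 1 < k),
      σ (uP (m + 1) hm (f ⟨m + 1, hm⟩) (l + 1) (by omega)) <
        σ (cP l (m + 1) (by omega) hm) := by
  intro l
  induction l with
  | zero =>
      intro m hlm hm
      apply ver3b_use (hk := hk) (hq := hq) hT 0 m (by omega) hm
      exact lt_trans (hf0 (m + 1) hm)
        (sC_C hB hT (m + 2) (by omega) 0 (m + 1) (by omega) hm)
  | succ l ih =>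
      intro m hlm hm
      apply ver3b_use (hk := hk) (hq := hq) hT (l + 1) m hlm hm
      exact lt_trans (ih m (by omega) hm)
        (bC_C hB l (m + 1) (by omega) (by omega) (l + 1) (m + 1) (by omega) hm (Or.inl (by omega)))

lemma chainA (hB : SatB σ) (hT : SatT σ (USet hk hq Gadj)) (f : Fin k → Fin q)
    (hf0 : ∀ (i : ℕ) (hi : i < k),
      σ (uP i hi (f ⟨i, hi⟩) 0 (by omega)) < σ (sE ⟨i + 1, by omega⟩)) :
    ∀ (l m : ℕ) (hlm : l ≤ m) (hm : m + 1 < k),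
      σ (uP l (by omega) (f ⟨l, by omega⟩) (m + 1) (by omega)) <
        σ (cP l (m + 1) (by omega) hm) := by
  intro l m hlm
  induction m, hlm using Nat.le_induction with
  | base =>
      intro hm
      apply ver3a_use (hk := hk) (hq := hq) hT l l le_rfl hm
      match l, hm with
      | 0, hm =>
          exact lt_trans (hf0 0 (by omega)) (sC_C hB hT 1 (by omega) 0 1 (by omega) hm)
      | l' + 1, hm =>
          exact lt_trans (chainB hB hT f hf0 l' l' le_rfl (by omega))
            (bC_C hB l' (l' + 1) (by omega) (by omega) (l' + 1) (l' + 2) (by omega) hm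
              (Or.inl (by omega)))
  | succ m hlm ih =>
      intro hm
      apply ver3a_use (hk := hk) (hq := hq) hT l (m + 1) (by omega) hm
      exact lt_trans (ih (by omega))
        (bC_C hB l (m + 1) (by omega) (by omega) l (m + 2) (by omega) hm
          (Or.inr ⟨rfl, by omega⟩))

lemma forward_main (hk : 0 < k) (hq : 0 < q)
    (Gadj : (Fin k × Fin q) → (Fin k × Fin q) → Prop)
    (hsym : Symmetric Gadj)
    (σ : MCG k q ≃ Fin (Fintype.card (MCG k q))) (hB : SatB σ)
    (hT : SatT σ (USet hk hq Gadj)) :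
    ∃ f : Fin k → Fin q, ∀ i i' : Fin k, i ≠ i' → Gadj (i, f i) (i', f i') := by
  refine ⟨sel σ hq hB, ?_⟩
  set f := sel σ hq hB with hf
  have hf0 : ∀ (i : ℕ) (hi : i < k),
      σ (uP i hi (f ⟨i, hi⟩) 0 (by omega)) < σ (sE ⟨i + 1, by omega⟩) := by
    intro i hi
    have := sel_lt (hq := hq) hB ⟨i, hi⟩
    exact this
  have hf1 : ∀ (i : ℕ) (hi : i < k) (j : ℕ) (hj : j < k + 1), 1 ≤ j →
      σ (cP 0 0 le_rfl hk) < σ (uP i hi (f ⟨i, hi⟩) j hj) := by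
    intro i hi j hj hj1
    exact selU2 (hk := hk) hB hT ⟨i, hi⟩ (f ⟨i, hi⟩) ⟨j, hj⟩ (Or.inr ⟨rfl, hj1⟩)
  suffices hmain : ∀ i i' : Fin k, i.val < i'.val → Gadj (i, f i) (i', f i') by
    intro i i' hne
    rcases Nat.lt_trichotomy i.val i'.val with h | h | h
    · exact hmain i i' h
    · exact absurd (Fin.ext h) hne
    · exact hsym (hmain i' i h)
  intro i i' hlt
  by_contra hG
  obtain ⟨m, hm1⟩ : ∃ m, i'.val = m + 1 := ⟨i'.val - 1, by omega⟩
  have hm : m + 1 < k := hm1 ▸ i'.isLt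
  have hlk : i.val < k := i.isLt
  have hlm : i.val ≤ m := by omega
  have e1 : (⟨i.val, hlk⟩ : Fin k) = i := Fin.ext rfl
  have e2 : (⟨m + 1, hm⟩ : Fin k) = i' := Fin.ext (by simp only [Fin.val_mk]; omega)
  have hGm : ¬ Gadj (⟨i.val, by omega⟩, f ⟨i.val, by omega⟩) (⟨m + 1, hm⟩, f ⟨m + 1, hm⟩) := by
    rw [show (⟨i.val, by omega⟩ : Fin k) = i from e1, e2]
    exact hG
  have T1 := hT _ (memU7 (hk := hk) (hq := hq)
    ⟨i.val, m, hlm, hm, f ⟨i.val, by omega⟩, f ⟨m + 1, hm⟩, hGm, Or.inl rfl⟩)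
  have T2 := hT _ (memU7 (hk := hk) (hq := hq)
    ⟨i.val, m, hlm, hm, f ⟨i.val, by omega⟩, f ⟨m + 1, hm⟩, hGm, Or.inr rfl⟩)
  have hA : σ (uP i.val (by omega) (f ⟨i.val, by omega⟩) (m + 1) (by omega)) <
      σ (cP i.val (m + 1) (by omega) hm) := chainA hB hT f hf0 i.val m hlm hm
  have hBc : σ (uP (m + 1) hm (f ⟨m + 1, hm⟩) (i.val + 1) (by omega)) <
      σ (cP i.val (m + 1) (by omega) hm) := chainB hB hT f hf0 i.val m hlm hm
  have hA' : σ (cP i.val (m + 1) (by omega) hm) <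
      σ (uP i.val (by omega) (f ⟨i.val, by omega⟩) (m + 2) (by omega)) := by
    apply loc (hq := hq) hB hT i.val hlk (f ⟨i.val, by omega⟩) (m + 2) (by omega)
      (hf1 i.val hlk (m + 2) (by omega) (by omega)) i.val (m + 1) (by omega) hm
    intro l' m' h1 h2 hc
    omega
  have hB'' : σ (cP i.val (m + 1) (by omega) hm) <
      σ (uP (m + 1) hm (f ⟨m + 1, hm⟩) (i.val + 2) (by omega)) := by
    apply loc (hq := hq) hB hT (m + 1) hm (f ⟨m + 1, hm⟩) (i.val + 2) (by omega)
      (hf1 (m + 1) hm (i.val + 2) (by omega) (by omega)) i.val (m + 1) (by omega) hm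
    intro l' m' h1 h2 hc
    omega
  rcases T1 with ⟨hxy, _⟩ | ⟨_, hzx⟩
  · rcases T2 with ⟨hyx, _⟩ | ⟨_, hz2⟩
    · exact absurd hyx (lt_asymm hxy)
    · exact absurd (lt_trans (lt_trans hB'' hz2) hA) (lt_irrefl _)
  · exact absurd (lt_trans (lt_trans hA' hzx) hBc) (lt_irrefl _)

end ForwardChains

/-- correctness of the Multicolor Clique reduction: the
constructed instance admits an intermezzo ordering (respecting the pairs `B`
and all selection and verification triples) iff the properly `k`-colored graph
(with color classes of size `q`) has a clique with one vertex of each color. -/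
theorem stmt13 (hk : 0 < k) (hq : 0 < q)
    (Gadj : (Fin k × Fin q) → (Fin k × Fin q) → Prop)
    (hsym : Symmetric Gadj)
    (hproper : ∀ a b, Gadj a b → a.1 ≠ b.1) :
    (∃ σ : MCG k q ≃ Fin (Fintype.card (MCG k q)), SatB σ ∧
        SatT σ (Csel1 ∪ Csel2 hq ∪ Csel3 hk ∪ Cver1 ∪ Cver2 ∪ Cver3 ∪ Cver4 Gadj)) ↔
    (∃ f : Fin k → Fin q, ∀ i i' : Fin k, i ≠ i' → Gadj (i, f i) (i', f i')) := by
  constructor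
  · rintro ⟨σ, hB, hT⟩
    exact forward_main hk hq Gadj hsym σ hB hT
  · rintro ⟨f, hcl⟩
    exact backward hk hq Gadj f hcl
end

section
/- Let σ be a Generic Search ordering of the 3-SAT reduction graph G(I) with last-in tree T(I). Then for each clause C^i = {X_{j_0}(p_0), X_{j_1}(p_1), X_{j_2}(p_2)} there exists q ∈ {0,1,2} with c^i ≺_σ x^i_{j_q}; i.e., not all three occurrence vertices of clause i precede the clause vertex c^i. -/
/-- clause-gadget property of the 3-SAT reduction: for a GS
ordering σ of `G(I)` with last-in tree `T(I)`, in each clause gadget at least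
one of the three occurrence vertices `x^i_{j_q}` comes after the clause vertex
`c^i`. -/
theorem stmt19 {V : Type*} [Fintype V] (G : SimpleGraph V)
    (par : V → V) (r : V) (hT : IsSpanningTreeOf G par r)
    (σ : V ≃ Fin (Fintype.card V)) (hGS : IsGSOrder G σ)
    (hL : IsLTreeOf G par r σ)
    (Chub c : V) (a b x d e f : Fin 3 → V)
    -- tree structure of the clause gadget
    (hChub : par Chub = r) (hc : par c = Chub)
    (ha : ∀ p, par (a p) = c) (hb : ∀ p, par (b p) = a p)
    (hd : ∀ p, par (d p) = x p) (he : ∀ p, par (e p) = d p)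
    (hf : ∀ p, par (f p) = e p)
    (hxr : ∀ p, x p ≠ r)
    -- the occurrence-vertex branches do not hang below the clause hub
    (hnd : ∀ p, ¬ Descendant par (x p) Chub)
    -- non-tree edges of the clause gadget
    (hCe : ∀ p, G.Adj Chub (e p)) (hce : ∀ p, G.Adj c (e p))
    (haf : ∀ p, G.Adj (a p) (f p)) (hbe : ∀ p, G.Adj (b p) (e p))
    (hbd : ∀ p : Fin 3, G.Adj (b p) (d (p + 1)))
    -- the vertices of the gadget are pairwise distinct
    (hdist : List.Pairwise (· ≠ ·)
      ([r, Chub, c] ++ List.ofFn a ++ List.ofFn b ++ List.ofFn x ++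
        List.ofFn d ++ List.ofFn e ++ List.ofFn f)) :
    ∃ p : Fin 3, σ c < σ (x p) := by
  simp only [List.pairwise_append, List.pairwise_cons, List.mem_append, List.mem_cons,
    List.mem_ofFn, List.not_mem_nil, List.Pairwise.nil, Set.mem_range] at hdist
  obtain ⟨⟨⟨⟨⟨⟨⟨hr3, -, -, -⟩, -, crossA⟩, -, crossB⟩, -, -⟩, -, crossD⟩, -, crossE⟩,
    -, crossF⟩ := hdist
  have hChubr : Chub ≠ r := (hr3 Chub (Or.inl rfl)).symm
  have hcr : c ≠ r := (hr3 c (Or.inr (Or.inl rfl))).symm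
  have har : ∀ p, a p ≠ r := fun p => (crossA r (by tauto) (a p) ⟨p, rfl⟩).symm
  have hbr : ∀ p, b p ≠ r := fun p => (crossB r (by tauto) (b p) ⟨p, rfl⟩).symm
  have hdr : ∀ p, d p ≠ r := fun p => (crossD r (by tauto) (d p) ⟨p, rfl⟩).symm
  have her : ∀ p, e p ≠ r := fun p => (crossE r (by tauto) (e p) ⟨p, rfl⟩).symm
  have hfr : ∀ p, f p ≠ r := fun p => (crossF r (by tauto) (f p) ⟨p, rfl⟩).symm
  have hae : ∀ p, a p ≠ e p := fun p => crossE (a p) (by tauto) (e p) ⟨p, rfl⟩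
  have hpar : ∀ v, v ≠ r → σ (par v) < σ v := fun v hv => (hL.2 v hv).2.1
  have hmax : ∀ v, v ≠ r → ∀ u, G.Adj u v → σ u < σ v → σ u ≤ σ (par v) :=
    fun v hv => (hL.2 v hv).2.2
  have hr0 : ∀ v, σ r ≤ σ v := fun v => by
    rw [Fin.le_def, hL.1]; exact Nat.zero_le _
  by_contra hcon
  push_neg at hcon
  -- basic tree-edge orderings
  have hda : ∀ p, σ (d p) < σ (e p) := fun p => by
    have := hpar (e p) (her p); rwa [he p] at this
  have hef : ∀ p, σ (e p) < σ (f p) := fun p => by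
    have := hpar (f p) (hfr p); rwa [hf p] at this
  have hcA : ∀ p, σ c < σ (a p) := fun p => by
    have := hpar (a p) (har p); rwa [ha p] at this
  have hab : ∀ p, σ (a p) < σ (b p) := fun p => by
    have := hpar (b p) (hbr p); rwa [hb p] at this
  -- from edge Chub–e p : Chub comes before d p
  have h1 : ∀ p, σ Chub ≤ σ (d p) := by
    intro p
    rcases (σ.injective.ne (hCe p).ne).lt_or_gt with h | h
    · have := hmax (e p) (her p) Chub (hCe p) h; rwa [he p] at this
    · have h2 := hmax Chub hChubr (e p) (hCe p).symm h
      rw [hChub] at h2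
      exact absurd (σ.injective (le_antisymm h2 (hr0 (e p)))) (her p)
  -- from edge c–e p : c comes before d p
  have h2c : ∀ p, σ c ≤ σ (d p) := by
    intro p
    rcases (σ.injective.ne (hce p).ne).lt_or_gt with h | h
    · have := hmax (e p) (her p) c (hce p) h; rwa [he p] at this
    · have h2 := hmax c hcr (e p) (hce p).symm h
      rw [hc] at h2
      exact absurd ((h2.trans (h1 p)).trans_lt (hda p)) (lt_irrefl _)
  -- from edge a p–f p : a p comes before (or at) e p
  have h3 : ∀ p, σ (a p) ≤ σ (e p) := by
    intro p
    rcases (σ.injective.ne (haf p).ne).lt_or_gt with h | h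
    · have := hmax (f p) (hfr p) (a p) (haf p) h; rwa [hf p] at this
    · have h2 := hmax (a p) (har p) (f p) (haf p).symm h
      rw [ha] at h2
      exact absurd (((h2.trans (h2c p)).trans_lt (hda p)).trans (hef p)) (lt_irrefl _)
  -- from edge b p–e p : b p comes before (or at) d p
  have h4 : ∀ p, σ (b p) ≤ σ (d p) := by
    intro p
    rcases (σ.injective.ne (hbe p).ne).lt_or_gt with h | h
    · have := hmax (e p) (her p) (b p) (hbe p) h; rwa [he p] at this
    · have h2 := hmax (b p) (hbr p) (e p) (hbe p).symm h
      rw [hb] at h2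
      exact absurd (σ.injective (le_antisymm (h3 p) h2)) (hae p)
  -- from edge b p–d (p+1) : d (p+1) comes before (or at) a p
  have h5 : ∀ p : Fin 3, σ (d (p + 1)) ≤ σ (a p) := by
    intro p
    rcases (σ.injective.ne (hbd p).ne).lt_or_gt with h | h
    · have h2 := hmax (d (p + 1)) (hdr (p + 1)) (b p) (hbd p) h
      rw [hd] at h2
      exact absurd (((h2.trans (hcon (p + 1))).trans_lt (hcA p)).trans (hab p)) (lt_irrefl _)
    · have h2 := hmax (b p) (hbr p) (d (p + 1)) (hbd p).symm h
      rwa [hb] at h2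
  have h6 : ∀ p : Fin 3, σ (d (p + 1)) < σ (d p) :=
    fun p => (((h5 p).trans_lt (hab p)).trans_le (h4 p))
  have A : σ (d 1) < σ (d 0) := by have := h6 0; norm_num at this; exact this
  have B : σ (d 2) < σ (d 1) := by have := h6 1; norm_num at this; exact this
  have C : σ (d 0) < σ (d 2) := by have := h6 2; norm_num at this; exact this
  exact absurd (C.trans (B.trans A)) (lt_irrefl _)
end
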